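/- arXiv:0906.2614 — 7 statements merged into one kernel-verified Lean document; each statement's English description precedes it below -/
import Mathlib

section
/- Wald's theorem: For every countable family S of selection rules and every real p with 0 < p < 1, the set of sequences ω : ℕ → Bool that have limit frequency p and satisfy requirement II for every selection rule in S with limit p has the cardinality of the continuum (2^ℵ₀). -/
open Filter MeasureTheory Set
open scoped ENNReal

/-- The first `n` bits of `ω`, i.e. the list `[ω 0, …, ω (n-1)]`. -/
def prefixFn (ω : ℕ → Bool) (n : ℕ) : List Bool := List.ofFn fun i : Fin n => ω i

/-- `α` has limit frequency `p`: the fraction of `true`s among the first `N` terms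
tends to `p` as `N → ∞`. -/
def LimitFreq (α : ℕ → Bool) (p : ℝ) : Prop :=
  Tendsto (fun N => (((Finset.range N).filter fun i => α i = true).card : ℝ) / N)
    atTop (nhds p)

/-- The set of indices `i` such that the selection rule `s` selects the term `ω i`. -/
def SelectedIndices (s : List Bool → Bool) (ω : ℕ → Bool) : Set ℕ :=
  {i | s (prefixFn ω i) = true}

/-- The subsequence selected by `s` from `ω`: the selected terms, in increasing order of
index (meaningful when the selected index set is infinite). -/
noncomputable def SelectedSeq (s : List Bool → Bool) (ω : ℕ → Bool) : ℕ → Bool :=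
  fun n => ω (Nat.nth (· ∈ SelectedIndices s ω) n)

/-- Requirement II for the selection rule `s` with limit `p`: the subsequence selected by
`s` is finite or has limit frequency `p`. -/
def SatisfiesII (s : List Bool → Bool) (ω : ℕ → Bool) (p : ℝ) : Prop :=
  (SelectedIndices s ω).Finite ∨ LimitFreq (SelectedSeq s ω) p

/-- A (non-negative) martingale. -/
def IsMartingale (m : List Bool → ℝ) : Prop :=
  (∀ x, 0 ≤ m x) ∧ ∀ x, m x = (m (x ++ [false]) + m (x ++ [true])) / 2

/-- A (non-negative) supermartingale. -/
def IsSupermartingale (m : List Bool → ℝ) : Prop :=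
  (∀ x, 0 ≤ m x) ∧ ∀ x, (m (x ++ [false]) + m (x ++ [true])) / 2 ≤ m x

/-- `m` wins against `ω`: the values of `m` on the prefixes of `ω` are unbounded. -/
def Wins (m : List Bool → ℝ) (ω : ℕ → Bool) : Prop :=
  ∀ C : ℝ, ∃ n, C < m (prefixFn ω n)

/-- The cylinder of all infinite sequences extending the finite string `w`. -/
def cyl (w : List Bool) : Set (ℕ → Bool) := {ω | prefixFn ω w.length = w}

/-- `μ` is the uniform (fair-coin) measure on Cantor space, i.e. the infinite product
over `ℕ` of the uniform measure on `Bool`; it is characterized by its values on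
cylinders: `μ (cyl w) = 2 ^ (- length w)`. -/
def IsUniformMeasure (μ : Measure (ℕ → Bool)) : Prop :=
  ∀ w : List Bool, μ (cyl w) = ((2 : ℝ≥0∞) ^ w.length)⁻¹

/-- `X` is an effectively null set: some computable `g` produces, for every `k`, a
sequence of (optional) strings whose cylinders cover `X` and whose total measure is at
most `2^(-k)`. -/
def EffNull (X : Set (ℕ → Bool)) : Prop :=
  ∃ g : ℕ → ℕ → Option (List Bool), Computable₂ g ∧
    ∀ k : ℕ,
      (X ⊆ ⋃ n : ℕ, ⋃ w ∈ g k n, cyl w) ∧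
      (∑' n : ℕ, ((g k n).elim 0 fun w => ((2 : ℝ≥0∞) ^ w.length)⁻¹)) ≤
        ((2 : ℝ≥0∞) ^ k)⁻¹

/-- `ω` is Martin-Löf random: it belongs to no effectively null set. -/
def MLRandom (ω : ℕ → Bool) : Prop := ∀ X : Set (ℕ → Bool), EffNull X → ω ∉ X

/-- A canonical `Primcodable` structure on `ℚ`, via its canonical enumeration. -/
instance : Primcodable ℚ := Primcodable.ofEquiv ℕ (Denumerable.eqv ℚ)

/-- `f` is lower semicomputable: it is the pointwise supremum of a computable family of
rationals, nondecreasing in the second argument. -/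
def LowerSemicomputableFn (f : List Bool → ℝ) : Prop :=
  ∃ g : List Bool → ℕ → ℚ, Computable₂ g ∧ (∀ x, Monotone fun n => g x n) ∧
    ∀ x, f x = ⨆ n, ((g x n : ℝ))

/-- `f` is computable: some computable family of rationals approximates it within
`2^(-n)`. -/
def ComputableFn (f : List Bool → ℝ) : Prop :=
  ∃ g : List Bool → ℕ → ℚ, Computable₂ g ∧
    ∀ x n, |((g x n : ℝ)) - f x| ≤ (2 : ℝ) ^ (-(n : ℤ))

/-!
Under the product measure `Ber(p)^ℕ` on `ℕ → Bool`, stop a selection rule `s` after its `n`-th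
selection and bet one unit on `true` at every selected place. Since the rule only sees the past,
each centred bit `ω k - p` it bets on is orthogonal to every function of `ω 0, …, ω (k - 1)`, so
the sum of the first `n` centred selected bits has second moment at most `n`. Along `n = m²` these
bounds divided by `m⁴` are summable, hence almost surely the selected frequencies tend to `p`
along squares, and bounded increments fill the gaps between consecutive squares. Intersecting over
the countably many rules of `S` and the rule that selects everything leaves a set of full measure.
The measure has no atoms, so this set contains an uncountable Borel set, which by the Borel
isomorphism theorem has the cardinality of the continuum.
-/

open ProbabilityTheory unitInterval

open Cardinal in
lemma continuum_le_mk_of_ae_mem {α : Type} [MeasurableSpace α] [StandardBorelSpace α]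
    {μ : Measure α} [NeZero μ] [NullSingletonClass μ] {A : Set α} (hA : ∀ᵐ x ∂μ, x ∈ A) :
    𝔠 ≤ #A := by
  set E := (toMeasurable μ Aᶜ)ᶜ
  have hE_null : μ Eᶜ = 0 := by rw [compl_compl, measure_toMeasurable]; exact hA
  have hE_unc : ¬ Countable E := by
    rw [countable_coe_iff]
    intro hc
    refine NeZero.ne μ (Measure.measure_univ_eq_zero.1 ?_)
    rw [← union_compl_self E]
    exact measure_union_null (hc.measure_zero μ) hE_null
  have := (measurableSet_toMeasurable μ Aᶜ).compl.standardBorel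
  calc 𝔠 = #(ℕ → Bool) := by simp
    _ = #E := (mk_congr (PolishSpace.measurableEquivNatBoolOfNotCountable hE_unc).toEquiv).symm
    _ ≤ #A := mk_le_mk_of_subset (compl_subset_comm.1 (subset_toMeasurable μ Aᶜ))

lemma ae_tendsto_zero_of_tsum_lintegral_ne_top {α : Type*} [MeasurableSpace α] {μ : Measure α}
    {f : ℕ → α → ℝ≥0∞} (hf : ∀ n, Measurable (f n)) (h : ∑' n, ∫⁻ x, f n x ∂μ ≠ ∞) :
    ∀ᵐ x ∂μ, Tendsto (fun n => f n x) atTop (nhds 0) := by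
  rw [← lintegral_tsum fun n => (hf n).aemeasurable] at h
  filter_upwards [ae_lt_top (Measurable.tsum hf) h] with x hx
  exact ENNReal.tendsto_atTop_zero_of_tsum_ne_top hx.ne

lemma tendsto_zero_of_tendsto_ofReal_sq {a : ℕ → ℝ}
    (h : Tendsto (fun n => ENNReal.ofReal (a n ^ 2)) atTop (nhds 0)) :
    Tendsto a atTop (nhds 0) := by
  have hsq := (ENNReal.tendsto_toReal ENNReal.zero_ne_top).comp h
  simp only [Function.comp_def, ENNReal.toReal_ofReal (sq_nonneg _), ENNReal.toReal_zero] at hsq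
  have habs := (Real.continuous_sqrt.tendsto 0).comp hsq
  simp only [Function.comp_def, Real.sqrt_sq_eq_abs, Real.sqrt_zero] at habs
  exact (tendsto_zero_iff_abs_tendsto_zero a).2 habs

lemma abs_sum_range_sub_sum_range_le {d : ℕ → ℝ} (hd : ∀ i, |d i| ≤ 1) {M N : ℕ} (h : M ≤ N) :
    |∑ i ∈ Finset.range N, d i - ∑ i ∈ Finset.range M, d i| ≤ N - M := by
  rw [← Finset.sum_range_add_sum_Ico _ h, add_sub_cancel_left]
  calc |∑ i ∈ Finset.Ico M N, d i| ≤ ∑ i ∈ Finset.Ico M N, |d i| := Finset.abs_sum_le_sum_abs _ _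
    _ ≤ ∑ _i ∈ Finset.Ico M N, (1 : ℝ) := Finset.sum_le_sum fun i _ => hd i
    _ = N - M := by simp [Nat.cast_sub h]

lemma tendsto_sum_div_of_tendsto_sum_sq_div {d : ℕ → ℝ} (hd : ∀ i, |d i| ≤ 1)
    (h : Tendsto (fun m : ℕ => (∑ i ∈ Finset.range (m ^ 2), d i) / (m : ℝ) ^ 2) atTop (nhds 0)) :
    Tendsto (fun N : ℕ => (∑ i ∈ Finset.range N, d i) / N) atTop (nhds 0) := by
  set u : ℕ → ℝ := fun N => ∑ i ∈ Finset.range N, d i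
  have hbound : ∀ N ≥ 1, ‖u N / N‖ ≤ |u (N.sqrt ^ 2) / (N.sqrt : ℝ) ^ 2| + 2 / N.sqrt := by
    intro N hN
    set q := N.sqrt
    have hq : (1 : ℝ) ≤ q := by exact_mod_cast Nat.sqrt_pos.2 hN
    have hqN : ((q ^ 2 : ℕ) : ℝ) ≤ N := by exact_mod_cast Nat.sqrt_le' N
    have hNq : (N : ℝ) ≤ q ^ 2 + 2 * q := by
      have := Nat.lt_succ_sqrt' N
      exact_mod_cast (by nlinarith : N ≤ q ^ 2 + 2 * q)
    have hgap := abs_sum_range_sub_sum_range_le hd (Nat.sqrt_le' N)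
    push_cast at hqN hgap
    calc ‖u N / N‖ = |u N| / N := by rw [Real.norm_eq_abs, abs_div, Nat.abs_cast]
      _ ≤ (|u (q ^ 2)| + 2 * q) / q ^ 2 := by
          refine div_le_div₀ (by positivity) ?_ (by positivity) hqN
          linarith [abs_sub_abs_le_abs_sub (u N) (u (q ^ 2))]
      _ = |u (q ^ 2) / (q : ℝ) ^ 2| + 2 / q := by
          rw [abs_div, abs_of_pos (by positivity : (0 : ℝ) < q ^ 2)]
          field_simp
  have hsqrt : Tendsto Nat.sqrt atTop atTop :=
    tendsto_atTop_atTop.2 fun b => ⟨b ^ 2, fun N hN => Nat.le_sqrt'.2 hN⟩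
  have hlim := ((tendsto_zero_iff_abs_tendsto_zero _).1 h).add
    (tendsto_const_div_atTop_nhds_zero_nat 2) |>.comp hsqrt
  rw [add_zero] at hlim
  exact squeeze_zero_norm' (eventually_ge_atTop 1 |>.mono hbound) hlim

lemma eventually_le_count {S : Set ℕ} [DecidablePred (· ∈ S)] (hS : S.Infinite) (n : ℕ) :
    ∀ᶠ K in atTop, n ≤ Nat.count (· ∈ S) K := by
  filter_upwards [eventually_ge_atTop (Nat.nth (· ∈ S) n)] with K hK
  calc n = Nat.count (· ∈ S) (Nat.nth (· ∈ S) n) :=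
        (Nat.count_nth_of_infinite (p := (· ∈ S)) hS n).symm
    _ ≤ Nat.count (· ∈ S) K := Nat.count_monotone _ hK

lemma DependsOn.comp_left {ι β γ : Type*} {α : ι → Type*} {f : (Π i, α i) → β} {s : Set ι}
    (hf : DependsOn f s) (g : β → γ) : DependsOn (fun x => g (f x)) s :=
  fun _ _ h => congrArg g (hf h)

lemma DependsOn.measurable_of_finset {ι X β : Type*} [MeasurableSpace X] [Countable X]
    [MeasurableSingletonClass X] [MeasurableSpace β] [Nonempty β] {f : (ι → X) → β}
    {s : Finset ι} (hf : DependsOn f s) : Measurable f := by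
  obtain ⟨g, rfl⟩ := dependsOn_iff_exists_comp.1 hf
  exact (measurable_of_countable g).comp (by fun_prop)

lemma DependsOn.integrable_of_finset {ι X : Type*} [MeasurableSpace X] [Finite X]
    [MeasurableSingletonClass X] {μ : Measure (ι → X)} [IsFiniteMeasure μ] {f : (ι → X) → ℝ}
    {s : Finset ι} (hf : DependsOn f s) : Integrable f μ := by
  obtain ⟨g, rfl⟩ := dependsOn_iff_exists_comp.1 hf
  exact Integrable.of_finite.comp_measurable (by fun_prop)

namespace Wald

section Selection

lemma prefixFn_length (ω : ℕ → Bool) (n : ℕ) : (prefixFn ω n).length = n := by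
  simp [prefixFn]

lemma prefixFn_take (ω : ℕ → Bool) {j k : ℕ} (h : j ≤ k) :
    (prefixFn ω k).take j = prefixFn ω j := by
  rw [prefixFn, ← Fin.ofFn_take_eq_take_ofFn h]
  rfl

lemma prefixFn_congr {ω ω' : ℕ → Bool} {n : ℕ} (h : ∀ i < n, ω i = ω' i) :
    prefixFn ω n = prefixFn ω' n :=
  congrArg List.ofFn (funext fun i => h i i.2)

lemma dependsOn_prefixFn {β : Type*} (F : List Bool → β) (K : ℕ) :
    DependsOn (fun ω => F (prefixFn ω K)) (Finset.range K : Set ℕ) := fun ω ω' h => by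
  simp only [Finset.coe_range, mem_Iio] at h
  simp only [prefixFn_congr h]

instance (s : List Bool → Bool) (ω : ℕ → Bool) : DecidablePred (· ∈ SelectedIndices s ω) :=
  fun k => inferInstanceAs (Decidable (s (prefixFn ω k) = true))

def centered (p : ℝ) (b : Bool) : ℝ := (if b then 1 else 0) - p

def centeredSum (α : ℕ → Bool) (p : ℝ) (n : ℕ) : ℝ := ∑ i ∈ Finset.range n, centered p (α i)

def selectedExcess (s : List Bool → Bool) (p : ℝ) (K : ℕ) (ω : ℕ → Bool) : ℝ :=
  ∑ k ∈ Finset.range K, if s (prefixFn ω k) then centered p (ω k) else 0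

def selectionCount (s : List Bool → Bool) (w : List Bool) : ℕ :=
  ((Finset.range w.length).filter fun j => s (w.take j)).card

def stopAfter (s : List Bool → Bool) (n : ℕ) (w : List Bool) : Bool :=
  s w && decide (selectionCount s w < n)

variable (s : List Bool → Bool) (ω : ℕ → Bool)

lemma dependsOn_selectedExcess (p : ℝ) (K : ℕ) :
    DependsOn (selectedExcess s p K) (Finset.range K : Set ℕ) := by
  intro ω ω' h
  simp only [Finset.coe_range, mem_Iio] at h
  refine Finset.sum_congr rfl fun k hk => ?_
  have hk := Finset.mem_range.1 hk
  rw [prefixFn_congr fun i hi => h i (hi.trans hk), h k hk]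

lemma dependsOn_count_selectedIndices (K : ℕ) :
    DependsOn (fun ω => (Nat.count (· ∈ SelectedIndices s ω) K : ℝ)) (Finset.range K : Set ℕ) :=
  fun ω ω' h => by
    simp only [Finset.coe_range, mem_Iio] at h
    simp only [Nat.count_eq_card_filter_range]
    congr 2
    refine Finset.filter_congr fun k hk => ?_
    simp only [SelectedIndices, mem_ofPred_eq,
      prefixFn_congr fun i hi => h i (hi.trans (Finset.mem_range.1 hk))]

lemma selectionCount_prefixFn (k : ℕ) :
    selectionCount s (prefixFn ω k) = Nat.count (· ∈ SelectedIndices s ω) k := by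
  rw [selectionCount, Nat.count_eq_card_filter_range, prefixFn_length]
  exact congrArg Finset.card (Finset.filter_congr fun j hj => by
    rw [prefixFn_take ω (Finset.mem_range.1 hj).le]; rfl)

lemma mem_selectedIndices_stopAfter {n k : ℕ} :
    k ∈ SelectedIndices (stopAfter s n) ω ↔
      k ∈ SelectedIndices s ω ∧ Nat.count (· ∈ SelectedIndices s ω) k < n := by
  simp [SelectedIndices, stopAfter, selectionCount_prefixFn]

lemma count_stopAfter (n K : ℕ) :
    Nat.count (· ∈ SelectedIndices (stopAfter s n) ω) K =
      min (Nat.count (· ∈ SelectedIndices s ω) K) n := by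
  induction K with
  | zero => simp
  | succ K ih =>
    rw [Nat.count_succ, Nat.count_succ, ih]
    simp only [mem_selectedIndices_stopAfter]
    by_cases hK : K ∈ SelectedIndices s ω
    · simp only [hK, true_and, if_true]
      split_ifs <;> omega
    · simp [hK]

lemma selectedExcess_stopAfter (p : ℝ) (n K : ℕ) :
    selectedExcess (stopAfter s n) p K ω =
      centeredSum (SelectedSeq s ω) p (min (Nat.count (· ∈ SelectedIndices s ω) K) n) := by
  induction K with
  | zero => simp [selectedExcess, centeredSum]
  | succ K ih =>
    rw [selectedExcess, Finset.sum_range_succ, ← selectedExcess, ih, Nat.count_succ]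
    change _ + ite (K ∈ SelectedIndices (stopAfter s n) ω) _ _ = _
    simp only [mem_selectedIndices_stopAfter]
    by_cases hK : K ∈ SelectedIndices s ω
    · by_cases hn : Nat.count (· ∈ SelectedIndices s ω) K < n
      · rw [if_pos ⟨hK, hn⟩, if_pos hK, min_eq_left hn.le, min_eq_left hn, centeredSum,
          centeredSum, Finset.sum_range_succ, SelectedSeq, Nat.nth_count hK]
      · rw [if_neg (hn ·.2), if_pos hK, min_eq_right (not_lt.1 hn),
          min_eq_right (by omega), add_zero]
    · rw [if_neg (hK ·.1), if_neg hK, add_zero, add_zero]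

lemma limitFreq_of_tendsto_centeredSum_div {α : ℕ → Bool} {p : ℝ}
    (h : Tendsto (fun N : ℕ => centeredSum α p N / N) atTop (nhds 0)) : LimitFreq α p := by
  have hp : Tendsto (fun N : ℕ => centeredSum α p N / N + p) atTop (nhds p) := by
    simpa using h.add_const p
  refine hp.congr' (eventually_ne_atTop 0 |>.mono fun N hN => ?_)
  have hcard : (((Finset.range N).filter fun i => α i = true).card : ℝ) =
      centeredSum α p N + N * p := by
    simp [centeredSum, centered, Finset.sum_sub_distrib, Finset.sum_boole]
  dsimp only
  rw [hcard]
  field_simp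

lemma limitFreq_of_satisfiesII_selectAll {p : ℝ} (h : SatisfiesII (fun _ => true) ω p) :
    LimitFreq ω p := by
  have hsel : SelectedIndices (fun _ => true) ω = univ := eq_univ_of_forall fun _ => rfl
  have hseq : SelectedSeq (fun _ => true) ω = ω :=
    funext fun n => congrArg ω (Nat.nth_of_forall fun _ _ => rfl)
  exact hseq ▸ h.resolve_left (hsel ▸ infinite_univ)

end Selection

section CoinFlips

noncomputable def coinFlips (p : I) : Measure (ℕ → Bool) :=
  Measure.infinitePi fun _ => bernoulliMeasure true false p

variable {p : I}

instance : IsProbabilityMeasure (coinFlips p) := by unfold coinFlips; infer_instance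

lemma coinFlips_singleton_le (ω : ℕ → Bool) (n : ℕ) :
    coinFlips p {ω} ≤ (max (toNNReal p) (toNNReal (σ p)) : ℝ≥0∞) ^ n := by
  calc coinFlips p {ω} ≤ coinFlips p ((Finset.range n : Set ℕ).pi fun i => {ω i}) :=
        measure_mono fun x hx => by simp_all
    _ = ∏ i ∈ Finset.range n, bernoulliMeasure true false p {ω i} :=
        Measure.infinitePi_pi _ fun _ _ => measurableSet_singleton _
    _ ≤ ∏ i ∈ Finset.range n, (max (toNNReal p) (toNNReal (σ p)) : ℝ≥0∞) := by
        gcongr with i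
        cases ω i <;> simp
    _ = _ := by simp

lemma nullSingletonClass_coinFlips (hp0 : 0 < p) (hp1 : p < 1) :
    NullSingletonClass (coinFlips p) := by
  refine ⟨fun ω => le_antisymm ?_ bot_le⟩
  refine ge_of_tendsto (ENNReal.tendsto_pow_atTop_nhds_zero_of_lt_one ?_)
    (Eventually.of_forall (coinFlips_singleton_le ω))
  simp only [max_lt_iff, ENNReal.coe_lt_one_iff, ← NNReal.coe_lt_one, coe_toNNReal, coe_symm_eq]
  exact ⟨hp1, by simpa using hp0⟩

lemma abs_centered_le_one (b : Bool) : |centered p b| ≤ 1 := by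
  have := p.2.1; have := p.2.2
  cases b <;> simp [centered, abs_le] <;> constructor <;> linarith

lemma integral_centered : ∫ b, centered p b ∂bernoulliMeasure true false p = 0 := by
  simp [integral_bernoulliMeasure, centered]
  ring

lemma integral_centered_eval (l : ℕ) : ∫ ω, centered p (ω l) ∂coinFlips p = 0 := by
  rw [← integral_centered (p := p),
    ← Measure.infinitePi_map_eval (fun _ => bernoulliMeasure true false p) l,
    integral_map (measurable_pi_apply l).aemeasurable
      (measurable_of_countable _).aestronglyMeasurable]
  rfl

lemma integral_mul_centered_eq_zero {f : (ℕ → Bool) → ℝ} {l : ℕ}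
    (hf : DependsOn f (Finset.range l : Set ℕ)) :
    ∫ ω, f ω * centered p (ω l) ∂coinFlips p = 0 := by
  obtain ⟨g, rfl⟩ := dependsOn_iff_exists_comp.1 hf
  set c : (({l} : Finset ℕ) → Bool) → ℝ := fun v => centered p (v ⟨l, by simp⟩)
  have hpast : Measurable fun (ω : ℕ → Bool) (i : Finset.range l) => ω i := by fun_prop
  have hnow : Measurable fun (ω : ℕ → Bool) (i : ({l} : Finset ℕ)) => ω i := by fun_prop
  have hindep := (iIndepFun_infinitePi (P := fun _ => bernoulliMeasure true false p)
    (X := fun _ b => b) fun _ => measurable_id).indepFun_finset (Finset.range l) {l}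
    (by simp) fun i => measurable_pi_apply i
  have := (hindep.comp (measurable_of_countable g) (measurable_of_countable c)
    ).integral_fun_mul_eq_mul_integral
    ((measurable_of_countable g).comp hpast).aestronglyMeasurable
    ((measurable_of_countable c).comp hnow).aestronglyMeasurable
  exact this.trans (mul_eq_zero_of_right _ (integral_centered_eval l))

variable (s : List Bool → Bool)

lemma sq_selectedExcess_succ_le (K : ℕ) (ω : ℕ → Bool) :
    selectedExcess s p (K + 1) ω ^ 2 ≤ selectedExcess s p K ω ^ 2 +
      2 * ((if s (prefixFn ω K) then 1 else 0) * selectedExcess s p K ω * centered p (ω K)) +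
      (if s (prefixFn ω K) then 1 else 0) := by
  have := abs_centered_le_one (p := p) (ω K)
  simp only [selectedExcess, Finset.sum_range_succ]
  split_ifs
  · nlinarith [sq_abs (centered p (ω K)), abs_nonneg (centered p (ω K))]
  · simp

lemma integral_sq_selectedExcess_succ_le (K : ℕ) :
    ∫ ω, selectedExcess s p (K + 1) ω ^ 2 ∂coinFlips p ≤
      ∫ ω, selectedExcess s p K ω ^ 2 ∂coinFlips p +
        ∫ ω, (if s (prefixFn ω K) then 1 else 0 : ℝ) ∂coinFlips p := by
  set X := selectedExcess s p K
  set ind : (ℕ → Bool) → ℝ := fun ω => if s (prefixFn ω K) then 1 else 0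
  have hX := dependsOn_selectedExcess s p K
  have hind : DependsOn ind (Finset.range K : Set ℕ) :=
    dependsOn_prefixFn (fun w => if s w then (1 : ℝ) else 0) K
  have hgated : DependsOn (fun ω => ind ω * X ω) (Finset.range K : Set ℕ) :=
    fun _ _ h => congrArg₂ (· * ·) (hind h) (hX h)
  have hcross : DependsOn (fun ω => ind ω * X ω * centered p (ω K))
      (Finset.range (K + 1) : Set ℕ) := fun _ _ h =>
    congrArg₂ (· * centered p ·) (hgated.mono (by simp) h) (h K (by simp))
  have i1 : Integrable (fun ω => X ω ^ 2) (coinFlips p) :=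
    (hX.comp_left (· ^ 2)).integrable_of_finset
  have i2 : Integrable (fun ω => 2 * (ind ω * X ω * centered p (ω K))) (coinFlips p) :=
    hcross.integrable_of_finset.const_mul 2
  have i12 : Integrable (fun ω => X ω ^ 2 + 2 * (ind ω * X ω * centered p (ω K)))
    (coinFlips p) := i1.add i2
  calc ∫ ω, selectedExcess s p (K + 1) ω ^ 2 ∂coinFlips p
      ≤ ∫ ω, X ω ^ 2 + 2 * (ind ω * X ω * centered p (ω K)) + ind ω ∂coinFlips p :=
        integral_mono
          ((dependsOn_selectedExcess s p (K + 1)).comp_left (· ^ 2)).integrable_of_finset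
          (i12.add hind.integrable_of_finset) (sq_selectedExcess_succ_le s K)
    _ = ∫ ω, X ω ^ 2 ∂coinFlips p +
          2 * ∫ ω, ind ω * X ω * centered p (ω K) ∂coinFlips p + ∫ ω, ind ω ∂coinFlips p := by
        rw [integral_add i12 hind.integrable_of_finset, integral_add i1 i2, integral_const_mul]
    _ = ∫ ω, X ω ^ 2 ∂coinFlips p + ∫ ω, ind ω ∂coinFlips p := by
        rw [integral_mul_centered_eq_zero hgated, mul_zero, add_zero]

lemma integral_selectedExcess_sq_le (K : ℕ) :
    ∫ ω, selectedExcess s p K ω ^ 2 ∂coinFlips p ≤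
      ∫ ω, (Nat.count (· ∈ SelectedIndices s ω) K : ℝ) ∂coinFlips p := by
  induction K with
  | zero => simp [selectedExcess]
  | succ K ih =>
    have hind := dependsOn_prefixFn (fun w => if s w then (1 : ℝ) else 0) K
    calc ∫ ω, selectedExcess s p (K + 1) ω ^ 2 ∂coinFlips p
        ≤ ∫ ω, selectedExcess s p K ω ^ 2 ∂coinFlips p +
            ∫ ω, (if s (prefixFn ω K) then 1 else 0 : ℝ) ∂coinFlips p :=
          integral_sq_selectedExcess_succ_le s K
      _ ≤ ∫ ω, (Nat.count (· ∈ SelectedIndices s ω) K : ℝ) ∂coinFlips p +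
            ∫ ω, (if s (prefixFn ω K) then 1 else 0 : ℝ) ∂coinFlips p := by
          gcongr
      _ = ∫ ω, (Nat.count (· ∈ SelectedIndices s ω) (K + 1) : ℝ) ∂coinFlips p := by
          rw [← integral_add (dependsOn_count_selectedIndices s K).integrable_of_finset
            hind.integrable_of_finset]
          congr 1 with ω
          simp only [Nat.count_succ]
          push_cast
          rfl

/-- Equal to `centeredSum (SelectedSeq s ω) p n ^ 2` when `s` selects infinitely often
(`stoppedSumSq_eq`); the `liminf` over the horizon `K` makes it measurable in `ω`. -/
noncomputable def stoppedSumSq (s : List Bool → Bool) (p : ℝ) (n : ℕ) (ω : ℕ → Bool) : ℝ≥0∞ :=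
  liminf (fun K => ENNReal.ofReal (selectedExcess (stopAfter s n) p K ω ^ 2)) atTop

lemma stoppedSumSq_eq {ω : ℕ → Bool} (hinf : (SelectedIndices s ω).Infinite) (p : ℝ) (n : ℕ) :
    stoppedSumSq s p n ω = ENNReal.ofReal (centeredSum (SelectedSeq s ω) p n ^ 2) := by
  refine Tendsto.liminf_eq (tendsto_nhds_of_eventually_eq ?_)
  filter_upwards [eventually_le_count hinf n] with K hK
  rw [selectedExcess_stopAfter, min_eq_right hK]

lemma measurable_stoppedSumSq (p : ℝ) (n : ℕ) : Measurable (stoppedSumSq s p n) :=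
  Measurable.liminf fun K =>
    ((dependsOn_selectedExcess _ p K).measurable_of_finset.pow_const 2).ennreal_ofReal

lemma lintegral_stoppedSumSq_le (n : ℕ) : ∫⁻ ω, stoppedSumSq s p n ω ∂coinFlips p ≤ n := by
  refine (lintegral_liminf_le fun K => ?_).trans ?_
  · exact ((dependsOn_selectedExcess _ p K).measurable_of_finset.pow_const 2).ennreal_ofReal
  refine (liminf_le_liminf (v := fun _ => (n : ℝ≥0∞)) (Eventually.of_forall fun K => ?_)).trans
    (by simp)
  rw [← ofReal_integral_eq_lintegral_ofReal, ← ENNReal.ofReal_natCast]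
  · refine ENNReal.ofReal_le_ofReal ((integral_selectedExcess_sq_le _ K).trans ?_)
    calc ∫ ω, (Nat.count (· ∈ SelectedIndices (stopAfter s n) ω) K : ℝ) ∂coinFlips p
        ≤ ∫ _, (n : ℝ) ∂coinFlips p :=
          integral_mono (dependsOn_count_selectedIndices _ K).integrable_of_finset
            (integrable_const _) fun ω => by simp [count_stopAfter]
      _ = n := by simp
  · exact ((dependsOn_selectedExcess _ p K).comp_left (· ^ 2)).integrable_of_finset
  · exact Eventually.of_forall fun _ => sq_nonneg _

lemma tsum_lintegral_stoppedSumSq_sq_div_ne_top :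
    ∑' m : ℕ, ∫⁻ ω, stoppedSumSq s p (m ^ 2) ω * ENNReal.ofReal (1 / (m : ℝ) ^ 4) ∂coinFlips p
      ≠ ∞ := by
  refine ne_top_of_le_ne_top (b := ∑' m : ℕ, ENNReal.ofReal (1 / (m : ℝ) ^ 2)) ?_
    (ENNReal.tsum_le_tsum fun m => ?_)
  · rw [← ENNReal.ofReal_tsum_of_nonneg (fun _ => by positivity)
      (Real.summable_one_div_nat_pow.2 one_lt_two)]
    exact ENNReal.ofReal_ne_top
  rw [lintegral_mul_const _ (measurable_stoppedSumSq s p _)]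
  calc (∫⁻ ω, stoppedSumSq s p (m ^ 2) ω ∂coinFlips p) * ENNReal.ofReal (1 / (m : ℝ) ^ 4)
      ≤ ENNReal.ofReal ((m : ℝ) ^ 2) * ENNReal.ofReal (1 / (m : ℝ) ^ 4) := by
        gcongr
        calc ∫⁻ ω, stoppedSumSq s p (m ^ 2) ω ∂coinFlips p ≤ ((m ^ 2 : ℕ) : ℝ≥0∞) :=
              lintegral_stoppedSumSq_le s (m ^ 2)
          _ = ENNReal.ofReal ((m : ℝ) ^ 2) := by norm_cast
    _ = ENNReal.ofReal (1 / (m : ℝ) ^ 2) := by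
        rw [← ENNReal.ofReal_mul (by positivity)]
        congr 1
        rcases eq_or_ne (m : ℝ) 0 with hm | hm
        · simp [hm]
        · field_simp

lemma ae_tendsto_centeredSum_sq_div :
    ∀ᵐ ω ∂coinFlips p, (SelectedIndices s ω).Infinite →
      Tendsto (fun m : ℕ => centeredSum (SelectedSeq s ω) p (m ^ 2) / (m : ℝ) ^ 2) atTop
        (nhds 0) := by
  filter_upwards [ae_tendsto_zero_of_tsum_lintegral_ne_top
    (fun m => (measurable_stoppedSumSq s p _).mul_const _)
    (tsum_lintegral_stoppedSumSq_sq_div_ne_top s)] with ω hω hinf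
  refine tendsto_zero_of_tendsto_ofReal_sq (hω.congr fun m => ?_)
  rw [stoppedSumSq_eq s hinf, ← ENNReal.ofReal_mul (sq_nonneg _), div_pow, ← pow_mul]
  ring_nf

lemma ae_satisfiesII : ∀ᵐ ω ∂coinFlips p, SatisfiesII s ω p := by
  filter_upwards [ae_tendsto_centeredSum_sq_div s] with ω hω
  refine (Set.finite_or_infinite _).imp_right fun hinf => ?_
  exact limitFreq_of_tendsto_centeredSum_div
    (tendsto_sum_div_of_tendsto_sum_sq_div (fun _ => abs_centered_le_one _) (hω hinf))

end CoinFlips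

end Wald

/-- **Wald's theorem.** For every countable family `S` of selection rules and every
`p ∈ (0,1)`, the set of sequences with limit frequency `p` satisfying requirement II
(with limit `p`) for every rule in `S` has the cardinality of the continuum. -/
theorem wald_collectives_continuum (S : Set (List Bool → Bool)) (hS : S.Countable)
    (p : ℝ) (hp0 : 0 < p) (hp1 : p < 1) :
    Cardinal.mk {ω : ℕ → Bool | LimitFreq ω p ∧ ∀ s ∈ S, SatisfiesII s ω p} =
      Cardinal.continuum := by
  let q : I := ⟨p, hp0.le, hp1.le⟩
  have := Wald.nullSingletonClass_coinFlips (p := q) hp0 hp1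
  refine le_antisymm ((Cardinal.mk_set_le _).trans (by simp))
    (continuum_le_mk_of_ae_mem (μ := Wald.coinFlips q) ?_)
  have hS_ae : ∀ᵐ ω ∂Wald.coinFlips q, ∀ s ∈ S, SatisfiesII s ω p :=
    (ae_ball_iff hS).2 fun s _ => Wald.ae_satisfiesII s
  filter_upwards [hS_ae, Wald.ae_satisfiesII (p := q) fun _ => true] with ω hωS hω
  exact ⟨Wald.limitFreq_of_satisfiesII_selectAll ω hω, hωS⟩
end

section
/- Ville's theorem: For every countable family S of selection rules there exists a sequence ω : ℕ → Bool such that ω has limit frequency 1/2, ω satisfies requirement II for every selection rule in S with limit 1/2, and for every n the number of indices i < n with ω i = false is at least the number of indices i < n with ω i = true. -/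
open Filter MeasureTheory Set
open scoped ENNReal

/-!
The sequence is built greedily against a potential. Let the next bit be a zero with probability
`(1 + ε) / 2`, where `ε = 1` while zeros and ones are tied and otherwise `ε = drift n`, of order
`n ^ (-1/4)`. For a rule `g` and a scale `θ = 2 ^ (-m)`, let `D` be the discrepancy (zeros minus
ones) of the subsequence selected by `g`; then `((1 + θ) ^ D + (1 + θ) ^ (-D)) / ∏ (ch + ε sh)`
is a positive supermartingale, and so is `(1 + θ) ^ (-D) / ∏ (ch - ε sh)` for the global
discrepancy `D`. So is a weighted sum of all of them, hence some next bit never increases it,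
and along the sequence so chosen every term stays bounded.

For a rule term, taking logarithms gives `|D| ≤ C / θ + θ K + 2 ∑ ε` after `K` selected bits,
which is `o(K)` as soon as `ε → 0`: every infinite selected subsequence, and the sequence itself,
has frequency `1/2`. For a global term at a tie after `n` bits, with `θ = drift n / 2`, the
denominator is at most `(1 - θ ^ 2 / 2) ^ n`, so `n * drift n ^ 3` stays bounded. Hence there are
only finitely many ties, and indeed `ε → 0`. A tie forces a zero, so the ones never get ahead.
-/

namespace Ville

open Finset Topology

def sgn (b : Bool) : ℤ := if b then -1 else 1

theorem sum_range_sgn (α : ℕ → Bool) (K : ℕ) :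
    ∑ k ∈ range K, sgn (α k) =
      (#{k ∈ range K | α k = false} : ℤ) - #{k ∈ range K | α k = true} := by
  induction K with
  | zero => simp
  | succ K ih =>
    rw [sum_range_succ, ih, range_add_one, filter_insert, filter_insert]
    cases α K <;> simp [sgn] <;> ring

theorem card_filter_false_add_card_filter_true (α : ℕ → Bool) (K : ℕ) :
    #{k ∈ range K | α k = false} + #{k ∈ range K | α k = true} = K := by
  rw [add_comm, ← card_range K]
  simpa using card_filter_add_card_filter_not (s := range K) (fun k => α k = true)

theorem limitFreq_half_of_tendsto {α : ℕ → Bool}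
    (h : Tendsto (fun K : ℕ => ((∑ k ∈ range K, sgn (α k) : ℤ) : ℝ) / K) atTop (𝓝 0)) :
    LimitFreq α (1 / 2) := by
  have hlim : Tendsto (fun K : ℕ => (1 - ((∑ k ∈ range K, sgn (α k) : ℤ) : ℝ) / K) / 2) atTop
      (𝓝 (1 / 2)) := by
    simpa using (h.const_sub 1).div_const 2
  refine hlim.congr' <| (eventually_gt_atTop 0).mono fun K hK => ?_
  have hcard : (#{k ∈ range K | α k = false} : ℝ) + #{k ∈ range K | α k = true} = K := by
    exact_mod_cast card_filter_false_add_card_filter_true α K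
  have hK : (K : ℝ) ≠ 0 := by positivity
  rw [sum_range_sgn]
  push_cast
  field_simp
  linear_combination -hcard

theorem tendsto_div_of_abs_le {u C θ e : ℕ → ℝ} (hθ : Tendsto θ atTop (𝓝 0))
    (he : Tendsto e atTop (𝓝 0)) (h : ∀ m K, |u K| ≤ C m + θ m * K + ∑ k ∈ range K, e k) :
    Tendsto (fun K : ℕ => u K / K) atTop (𝓝 0) := by
  refine Metric.tendsto_nhds.2 fun δ hδ => ?_
  have hδ3 : (0 : ℝ) < δ / 3 := by positivity
  obtain ⟨m, hm⟩ := (hθ.eventually (gt_mem_nhds hδ3)).exists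
  filter_upwards [(tendsto_const_div_atTop_nhds_zero_nat (C m)).eventually (gt_mem_nhds hδ3),
    he.cesaro.eventually (gt_mem_nhds hδ3), eventually_gt_atTop 0] with K hC he hK
  have hK : (0 : ℝ) < K := by exact_mod_cast hK
  rw [div_lt_iff₀ hK] at hC
  rw [inv_mul_lt_iff₀ hK] at he
  rw [Real.dist_eq, sub_zero, abs_div, Nat.abs_cast, div_lt_iff₀ hK]
  nlinarith [h m K]

theorem sum_filter_range_nth {p : ℕ → Prop} [DecidablePred p] (hp : {i | p i}.Infinite)
    {M : Type*} [AddCommMonoid M] (F : ℕ → M) (K : ℕ) :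
    ∑ i ∈ range (Nat.nth p K) with p i, F i = ∑ k ∈ range K, F (Nat.nth p k) := by
  induction K with
  | zero =>
    have : {i ∈ range (Nat.nth p 0) | p i} = ∅ :=
      card_eq_zero.1 (by rw [← Nat.count_eq_card_filter_range, Nat.count_nth_zero])
    rw [this, sum_empty, sum_range_zero]
  | succ K ih =>
    rw [Nat.filter_range_nth_eq_insert_of_infinite hp, sum_insert (by simp), ih, sum_range_succ,
      add_comm]

theorem prefixFn_succ (ω : ℕ → Bool) (n : ℕ) : prefixFn ω (n + 1) = prefixFn ω n ++ [ω n] := by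
  rw [prefixFn, prefixFn, List.ofFn_succ_last]
  rfl

instance (s : List Bool → Bool) (ω : ℕ → Bool) : DecidablePred (· ∈ SelectedIndices s ω) :=
  fun i => inferInstanceAs (Decidable (s (prefixFn ω i) = true))

theorem selectedSeq_const_true (ω : ℕ → Bool) : SelectedSeq (fun _ => true) ω = ω := by
  ext n
  simp [SelectedSeq, SelectedIndices]

@[to_additive]
def stepProd {M : Type*} [CommMonoid M] (F : List Bool → Bool → M) (x : List Bool) : M :=
  ∏ i ∈ range x.length, F (x.take i) (x.getD i false)

section Steps

variable {M : Type*} [CommMonoid M] (F : List Bool → Bool → M)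

@[to_additive]
theorem stepProd_nil : stepProd F [] = 1 := rfl

@[to_additive]
theorem stepProd_append (x : List Bool) (b : Bool) :
    stepProd F (x ++ [b]) = stepProd F x * F x b := by
  rw [stepProd, stepProd, List.length_append, List.length_singleton, prod_range_succ,
    List.take_left' rfl, List.getD_append_right _ _ _ _ le_rfl, Nat.sub_self]
  congr 1
  refine prod_congr rfl fun i hi => ?_
  have hi : i < x.length := mem_range.1 hi
  rw [List.take_append_of_le_length hi.le, List.getD_append _ _ _ _ hi]

end Steps

/-- `M` is a supermartingale for the coin that shows a zero with probability `(1 + ε x) / 2`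
after the history `x`. -/
def BiasedSupermartingale (ε M : List Bool → ℝ) : Prop :=
  ∀ x, (1 + ε x) / 2 * M (x ++ [false]) + (1 - ε x) / 2 * M (x ++ [true]) ≤ M x

namespace BiasedSupermartingale

variable {ε M N : List Bool → ℝ}

theorem add (hM : BiasedSupermartingale ε M) (hN : BiasedSupermartingale ε N) :
    BiasedSupermartingale ε (fun x => M x + N x) := fun x => by
  linarith [hM x, hN x]

theorem const_mul (hM : BiasedSupermartingale ε M) {a : ℝ} (ha : 0 ≤ a) :
    BiasedSupermartingale ε (fun x => a * M x) := fun x => by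
  linarith [mul_le_mul_of_nonneg_left (hM x) ha]

theorem tsum {ι : Type*} {M : ι → List Bool → ℝ} (hM : ∀ i, BiasedSupermartingale ε (M i))
    (hs : ∀ x, Summable fun i => M i x) :
    BiasedSupermartingale ε (fun x => ∑' i, M i x) := fun x => by
  rw [← tsum_mul_left, ← tsum_mul_left, ← Summable.tsum_add ((hs _).mul_left _)
    ((hs _).mul_left _)]
  exact Summable.tsum_le_tsum (fun i => hM i x) (((hs _).mul_left _).add ((hs _).mul_left _))
    (hs x)

theorem apply_append_false_le (hM : BiasedSupermartingale ε M) {x : List Bool}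
    (hx : ε x = 1) : M (x ++ [false]) ≤ M x := by
  simpa [hx] using hM x

theorem apply_append_true_le (hM : BiasedSupermartingale ε M) {x : List Bool}
    (h0 : 0 ≤ ε x) (h1 : ε x < 1) (hx : M x < M (x ++ [false])) : M (x ++ [true]) ≤ M x := by
  nlinarith [hM x]

end BiasedSupermartingale

noncomputable def expProc (r : ℝ) (d : List Bool → Bool → ℤ) (c : List Bool → ℝ)
    (x : List Bool) : ℝ :=
  r ^ stepSum d x / stepProd (fun y _ => c y) x

section ExpProc

variable {r : ℝ} {d : List Bool → Bool → ℤ} {c : List Bool → ℝ}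

theorem expProc_nil : expProc r d c [] = 1 := by simp [expProc, stepSum_nil, stepProd_nil]

theorem expProc_append (hr : r ≠ 0) (x : List Bool) (b : Bool) :
    expProc r d c (x ++ [b]) = expProc r d c x * (r ^ d x b / c x) := by
  rw [expProc, expProc, stepSum_append, stepProd_append, zpow_add₀ hr]
  ring

theorem expProc_pos (hr : 0 < r) (hc : ∀ y, 0 < c y) (x : List Bool) : 0 < expProc r d c x :=
  div_pos (zpow_pos hr _) (prod_pos fun _ _ => hc _)

theorem expProc_le_pow (hr : 0 < r) (hc : ∀ y, 0 < c y) {K : ℝ}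
    (hK : ∀ y b, r ^ d y b / c y ≤ K) (x : List Bool) : expProc r d c x ≤ K ^ x.length := by
  induction x using List.reverseRecOn with
  | nil => rw [expProc_nil, List.length_nil, pow_zero]
  | append_singleton x b ih =>
    rw [expProc_append hr.ne', List.length_append, List.length_singleton, pow_succ]
    exact mul_le_mul ih (hK x b) (div_pos (zpow_pos hr _) (hc x)).le
      ((expProc_pos hr hc x).le.trans ih)

theorem biasedSupermartingale_expProc {ε : List Bool → ℝ} (hr : 0 < r) (hc : ∀ y, 0 < c y)
    (h : ∀ y, (1 + ε y) / 2 * r ^ d y false + (1 - ε y) / 2 * r ^ d y true ≤ c y) :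
    BiasedSupermartingale ε (expProc r d c) := fun x => by
  rw [expProc_append hr.ne', expProc_append hr.ne']
  calc _ = expProc r d c x * (((1 + ε x) / 2 * r ^ d x false
        + (1 - ε x) / 2 * r ^ d x true) / c x) := by ring
    _ ≤ expProc r d c x * 1 := mul_le_mul_of_nonneg_left ((div_le_one (hc x)).2 (h x))
        (expProc_pos hr hc x).le
    _ = expProc r d c x := mul_one _

end ExpProc

noncomputable section

def theta (m : ℕ) : ℝ := (1 / 2) ^ m

def rho (m : ℕ) : ℝ := 1 + theta m

def ch (m : ℕ) : ℝ := (rho m + (rho m)⁻¹) / 2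

def sh (m : ℕ) : ℝ := (rho m - (rho m)⁻¹) / 2

theorem theta_pos (m : ℕ) : 0 < theta m := by unfold theta; positivity

theorem theta_le_one (m : ℕ) : theta m ≤ 1 := pow_le_one₀ (by norm_num) (by norm_num)

theorem two_mul_theta_succ (m : ℕ) : 2 * theta (m + 1) = theta m := by
  rw [theta, theta, pow_succ]; ring

theorem tendsto_theta : Tendsto theta atTop (𝓝 0) :=
  tendsto_pow_atTop_nhds_zero_of_lt_one (by norm_num) (by norm_num)

theorem summable_theta : Summable theta := summable_geometric_two

theorem one_lt_rho (m : ℕ) : 1 < rho m := by have := theta_pos m; rw [rho]; linarith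

theorem rho_pos (m : ℕ) : 0 < rho m := one_pos.trans (one_lt_rho m)

theorem rho_le_two (m : ℕ) : rho m ≤ 2 := by have := theta_le_one m; rw [rho]; linarith

theorem inv_rho_le_one (m : ℕ) : (rho m)⁻¹ ≤ 1 := inv_le_one_of_one_le₀ (one_lt_rho m).le

theorem half_le_inv_rho (m : ℕ) : 1 / 2 ≤ (rho m)⁻¹ := by
  rw [one_div]; exact inv_anti₀ (rho_pos m) (rho_le_two m)

theorem rho_mul_inv_rho (m : ℕ) : rho m * (rho m)⁻¹ = 1 := mul_inv_cancel₀ (rho_pos m).ne'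

theorem ch_sub_sh (m : ℕ) : ch m - sh m = (rho m)⁻¹ := by rw [ch, sh]; ring

theorem sh_le_theta (m : ℕ) : sh m ≤ theta m := by
  have := rho_mul_inv_rho m
  have := inv_pos.2 (rho_pos m)
  unfold sh rho at *
  nlinarith [theta_pos m]

theorem half_theta_le_sh (m : ℕ) : theta m / 2 ≤ sh m := by
  have := rho_mul_inv_rho m
  have := inv_pos.2 (rho_pos m)
  unfold sh rho at *
  nlinarith [theta_pos m, theta_le_one m]

theorem sh_nonneg (m : ℕ) : 0 ≤ sh m := by linarith [half_theta_le_sh m, theta_pos m]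

theorem one_le_ch (m : ℕ) : 1 ≤ ch m := by
  have := rho_mul_inv_rho m
  have := inv_pos.2 (rho_pos m)
  unfold ch rho at *
  nlinarith [theta_pos m]

theorem ch_le (m : ℕ) : ch m ≤ 1 + theta m ^ 2 / 2 := by
  have := rho_mul_inv_rho m
  have := inv_pos.2 (rho_pos m)
  unfold ch rho at *
  nlinarith [theta_pos m]

theorem half_theta_le_log_rho (m : ℕ) : theta m / 2 ≤ Real.log (rho m) := by
  have h := Real.log_le_sub_one_of_pos (inv_pos.2 (rho_pos m))
  rw [Real.log_inv] at h
  have : (rho m)⁻¹ ≤ 1 - theta m / 2 := by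
    rw [inv_le_iff_one_le_mul₀ (rho_pos m), rho]
    nlinarith [theta_le_one m, theta_pos m]
  linarith

theorem zpow_sgn_le_two {r : ℝ} (h : r ≤ 2) (h' : r⁻¹ ≤ 2) (b : Bool) : r ^ sgn b ≤ 2 := by
  cases b <;> simpa [sgn]

theorem avg_rho_zpow_sgn (m : ℕ) (e : ℝ) :
    (1 + e) / 2 * rho m ^ sgn false + (1 - e) / 2 * rho m ^ sgn true = ch m + e * sh m := by
  simp only [sgn, ch, sh]; norm_num; ring

theorem avg_inv_rho_zpow_sgn (m : ℕ) (e : ℝ) :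
    (1 + e) / 2 * (rho m)⁻¹ ^ sgn false + (1 - e) / 2 * (rho m)⁻¹ ^ sgn true =
      ch m - e * sh m := by
  simp only [sgn, ch, sh]; norm_num; ring

def driftExp (n : ℕ) : ℕ := Nat.log 2 (n + 2) / 4 + 1

/-- A dyadic staircase `≈ (n + 2) ^ (-1/4)`: small enough to average out to zero, large
enough that `n * drift n ^ 3 → ∞`. -/
def drift (n : ℕ) : ℝ := theta (driftExp n)

theorem drift_pos (n : ℕ) : 0 < drift n := theta_pos _

theorem drift_le_half (n : ℕ) : drift n ≤ 1 / 2 :=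
  pow_le_pow_of_le_one (by norm_num) (by norm_num) (by simp [driftExp]) |>.trans_eq (pow_one _)

theorem drift_antitone : Antitone drift := fun _ _ hij =>
  pow_le_pow_of_le_one (by norm_num) (by norm_num) <| Nat.add_le_add_right
    (Nat.div_le_div_right (Nat.log_mono_right (by omega))) 1

theorem tendsto_driftExp : Tendsto driftExp atTop atTop :=
  tendsto_atTop_atTop.2 fun b => ⟨2 ^ (4 * b), fun n hn => by
    have := Nat.le_log_of_pow_le one_lt_two (hn.trans (Nat.le_add_right n 2))
    simp only [driftExp]
    omega⟩

theorem tendsto_drift : Tendsto drift atTop (𝓝 0) := tendsto_theta.comp tendsto_driftExp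

theorem one_le_drift_pow_four (n : ℕ) : 1 ≤ 16 * (n + 2) * drift n ^ 4 := by
  have hpow : 2 ^ (4 * driftExp n) ≤ 16 * (n + 2) :=
    calc 2 ^ (4 * driftExp n) ≤ 2 ^ (Nat.log 2 (n + 2) + 4) :=
          Nat.pow_le_pow_right two_pos (by simp only [driftExp]; omega)
      _ = 2 ^ Nat.log 2 (n + 2) * 16 := pow_add _ _ _
      _ ≤ (n + 2) * 16 := Nat.mul_le_mul_right _ (Nat.pow_log_le_self 2 (by omega))
      _ = 16 * (n + 2) := mul_comm _ _
  have hpow' : (2 : ℝ) ^ (4 * driftExp n) ≤ 16 * (n + 2) := by exact_mod_cast hpow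
  have hdrift : drift n ^ 4 * 2 ^ (4 * driftExp n) = 1 := by
    rw [drift, theta, ← pow_mul, mul_comm (driftExp n), ← mul_pow]; norm_num
  nlinarith [pow_pos (drift_pos n) 4]

theorem tendsto_mul_drift_pow_three : Tendsto (fun n : ℕ => n * drift n ^ 3) atTop atTop := by
  have hinv : Tendsto (fun n => (48 * drift n)⁻¹) atTop atTop := by
    refine Tendsto.inv_tendsto_nhdsGT_zero (tendsto_nhdsWithin_iff.2 ⟨?_, ?_⟩)
    · simpa using tendsto_drift.const_mul 48
    · exact Eventually.of_forall fun n => by have := drift_pos n; simp; linarith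
  refine tendsto_atTop_mono' _ ((eventually_ge_atTop 1).mono fun n hn => ?_) hinv
  have hn : (1 : ℝ) ≤ n := by exact_mod_cast hn
  have hd := drift_pos n
  rw [inv_le_iff_one_le_mul₀ (by positivity)]
  nlinarith [one_le_drift_pow_four n, pow_pos hd 4]

def disc (x : List Bool) : ℤ := stepSum (fun _ b => sgn b) x

/-- The bias towards zero of the next bit; at a tie a zero is forced. -/
def bias (x : List Bool) : ℝ := if disc x = 0 then 1 else drift x.length

theorem bias_pos (x : List Bool) : 0 < bias x := by
  unfold bias; split_ifs
  · exact one_pos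
  · exact drift_pos _

theorem bias_le_one (x : List Bool) : bias x ≤ 1 := by
  unfold bias; split_ifs
  · exact le_rfl
  · linarith [drift_le_half x.length]

theorem drift_le_bias (x : List Bool) : drift x.length ≤ bias x := by
  unfold bias; split_ifs
  · linarith [drift_le_half x.length]
  · exact le_rfl

def ruleIncr (g : List Bool → Bool) (y : List Bool) (b : Bool) : ℤ := if g y then sgn b else 0

def ruleCost (g : List Bool → Bool) (m : ℕ) (y : List Bool) : ℝ :=
  if g y then ch m + bias y * sh m else 1

def globalCost (m : ℕ) (y : List Bool) : ℝ := ch m - bias y * sh m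

/-- Large when the subsequence selected by `g` has a large discrepancy of either sign. -/
def ruleTerm (g : List Bool → Bool) (m : ℕ) (x : List Bool) : ℝ :=
  expProc (rho m) (ruleIncr g) (ruleCost g m) x + expProc (rho m)⁻¹ (ruleIncr g) (ruleCost g m) x

/-- Large when the ones catch up with the zeros. -/
def globalTerm (m : ℕ) (x : List Bool) : ℝ :=
  expProc (rho m)⁻¹ (fun _ b => sgn b) (globalCost m) x

def potential (f : ℕ → List Bool → Bool) (x : List Bool) : ℝ :=
  (∑' p : ℕ × ℕ, theta p.1 * theta p.2 * ruleTerm (f p.1) p.2 x) +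
    ∑' m, theta m * globalTerm m x

theorem one_le_ruleCost (g : List Bool → Bool) (m : ℕ) (y : List Bool) : 1 ≤ ruleCost g m y := by
  unfold ruleCost; split_ifs
  · nlinarith [one_le_ch m, bias_pos y, sh_nonneg m]
  · exact le_rfl

theorem ruleCost_pos (g : List Bool → Bool) (m : ℕ) (y : List Bool) : 0 < ruleCost g m y :=
  one_pos.trans_le (one_le_ruleCost g m y)

theorem half_le_globalCost (m : ℕ) (y : List Bool) : 1 / 2 ≤ globalCost m y := by
  have := ch_sub_sh m
  unfold globalCost
  nlinarith [half_le_inv_rho m, bias_le_one y, sh_nonneg m]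

theorem globalCost_pos (m : ℕ) (y : List Bool) : 0 < globalCost m y :=
  one_half_pos.trans_le (half_le_globalCost m y)

theorem globalCost_le {m : ℕ} {y : List Bool} (h : 2 * theta m ≤ bias y) :
    globalCost m y ≤ 1 - theta m ^ 2 / 2 := by
  unfold globalCost
  nlinarith [ch_le m, half_theta_le_sh m, theta_pos m]

theorem log_ruleCost_le (g : List Bool → Bool) (m : ℕ) (y : List Bool) :
    Real.log (ruleCost g m y) ≤ if g y then theta m ^ 2 / 2 + theta m * bias y else 0 := by
  refine (Real.log_le_sub_one_of_pos (ruleCost_pos g m y)).trans ?_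
  unfold ruleCost; split_ifs
  · nlinarith [ch_le m, sh_le_theta m, bias_pos y]
  · simp

theorem ruleTerm_pos (g : List Bool → Bool) (m : ℕ) (x : List Bool) : 0 < ruleTerm g m x :=
  add_pos (expProc_pos (rho_pos m) (ruleCost_pos g m) x)
    (expProc_pos (inv_pos.2 (rho_pos m)) (ruleCost_pos g m) x)

theorem globalTerm_pos (m : ℕ) (x : List Bool) : 0 < globalTerm m x :=
  expProc_pos (inv_pos.2 (rho_pos m)) (globalCost_pos m) x

theorem ruleTerm_le (g : List Bool → Bool) (m : ℕ) (x : List Bool) :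
    ruleTerm g m x ≤ 2 * 2 ^ x.length := by
  have step (r : ℝ) (hr : 0 < r) (h : ∀ b, r ^ sgn b ≤ 2) :
      expProc r (ruleIncr g) (ruleCost g m) x ≤ 2 ^ x.length := by
    refine expProc_le_pow hr (ruleCost_pos g m) (fun y b => ?_) x
    rw [div_le_iff₀ (ruleCost_pos g m y)]
    unfold ruleIncr; split_ifs
    · nlinarith [h b, one_le_ruleCost g m y]
    · rw [zpow_zero]; linarith [one_le_ruleCost g m y]
  rw [ruleTerm, two_mul]
  exact add_le_add
    (step _ (rho_pos m) (zpow_sgn_le_two (rho_le_two m) (by linarith [inv_rho_le_one m])))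
    (step _ (inv_pos.2 (rho_pos m)) (zpow_sgn_le_two (by linarith [inv_rho_le_one m])
      (by rw [inv_inv]; exact rho_le_two m)))

theorem globalTerm_le (m : ℕ) (x : List Bool) : globalTerm m x ≤ 4 ^ x.length := by
  refine expProc_le_pow (inv_pos.2 (rho_pos m)) (globalCost_pos m) (fun y b => ?_) x
  rw [div_le_iff₀ (globalCost_pos m y)]
  have := zpow_sgn_le_two (by linarith [inv_rho_le_one m]) (by rw [inv_inv]; exact rho_le_two m) b
  nlinarith [half_le_globalCost m y]

theorem biasedSupermartingale_ruleTerm (g : List Bool → Bool) (m : ℕ) :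
    BiasedSupermartingale bias (ruleTerm g m) := by
  have step (r : ℝ) (hr : 0 < r)
      (h : ∀ y, (1 + bias y) / 2 * r ^ sgn false + (1 - bias y) / 2 * r ^ sgn true ≤
        ch m + bias y * sh m) :
      BiasedSupermartingale bias (expProc r (ruleIncr g) (ruleCost g m)) := by
    refine biasedSupermartingale_expProc hr (ruleCost_pos g m) fun y => ?_
    unfold ruleIncr ruleCost; split_ifs
    · exact h y
    · simp only [zpow_zero]; linarith
  refine (step _ (rho_pos m) fun y => (avg_rho_zpow_sgn m _).le).add
    (step _ (inv_pos.2 (rho_pos m)) fun y => ?_)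
  rw [avg_inv_rho_zpow_sgn]
  nlinarith [bias_pos y, sh_nonneg m]

theorem biasedSupermartingale_globalTerm (m : ℕ) :
    BiasedSupermartingale bias (globalTerm m) :=
  biasedSupermartingale_expProc (inv_pos.2 (rho_pos m)) (globalCost_pos m) fun _ =>
    (avg_inv_rho_zpow_sgn m _).le

theorem weighted_ruleTerm_nonneg (g : List Bool → Bool) (j m : ℕ) (x : List Bool) :
    0 ≤ theta j * theta m * ruleTerm g m x :=
  (mul_pos (mul_pos (theta_pos j) (theta_pos m)) (ruleTerm_pos g m x)).le

theorem weighted_globalTerm_nonneg (m : ℕ) (x : List Bool) : 0 ≤ theta m * globalTerm m x :=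
  (mul_pos (theta_pos m) (globalTerm_pos m x)).le

variable (f : ℕ → List Bool → Bool)

theorem summable_ruleTerm (x : List Bool) :
    Summable fun p : ℕ × ℕ => theta p.1 * theta p.2 * ruleTerm (f p.1) p.2 x :=
  Summable.of_nonneg_of_le (fun p => weighted_ruleTerm_nonneg _ p.1 p.2 x)
    (fun p => mul_le_mul_of_nonneg_left (ruleTerm_le (f p.1) p.2 x)
      (mul_pos (theta_pos _) (theta_pos _)).le)
    ((summable_theta.mul_of_nonneg summable_theta (fun m => (theta_pos m).le)
      (fun m => (theta_pos m).le)).mul_right (2 * 2 ^ x.length))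

theorem summable_globalTerm (x : List Bool) : Summable fun m => theta m * globalTerm m x :=
  Summable.of_nonneg_of_le (fun m => weighted_globalTerm_nonneg m x)
    (fun m => mul_le_mul_of_nonneg_left (globalTerm_le m x) (theta_pos m).le)
    (summable_theta.mul_right _)

theorem biasedSupermartingale_potential : BiasedSupermartingale bias (potential f) := by
  have hR : BiasedSupermartingale bias
      (fun x => ∑' p : ℕ × ℕ, theta p.1 * theta p.2 * ruleTerm (f p.1) p.2 x) :=
    BiasedSupermartingale.tsum (fun p => (biasedSupermartingale_ruleTerm (f p.1) p.2).const_mul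
      (mul_pos (theta_pos _) (theta_pos _)).le) (summable_ruleTerm f)
  have hG : BiasedSupermartingale bias (fun x => ∑' m, theta m * globalTerm m x) :=
    BiasedSupermartingale.tsum (fun m => (biasedSupermartingale_globalTerm m).const_mul
      (theta_pos m).le) summable_globalTerm
  exact hR.add hG

theorem ruleTerm_le_potential (j m : ℕ) (x : List Bool) :
    theta j * theta m * ruleTerm (f j) m x ≤ potential f x :=
  (Summable.le_tsum (summable_ruleTerm f x) (j, m) fun p _ =>
      weighted_ruleTerm_nonneg _ p.1 p.2 x).trans
    (le_add_of_nonneg_right (tsum_nonneg fun m => weighted_globalTerm_nonneg m x))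

theorem globalTerm_le_potential (m : ℕ) (x : List Bool) :
    theta m * globalTerm m x ≤ potential f x :=
  (Summable.le_tsum (summable_globalTerm x) m fun i _ => weighted_globalTerm_nonneg i x).trans
    (le_add_of_nonneg_left (tsum_nonneg fun p => weighted_ruleTerm_nonneg _ p.1 p.2 x))

theorem potential_pos (x : List Bool) : 0 < potential f x :=
  (mul_pos (theta_pos 0) (globalTerm_pos 0 x)).trans_le (globalTerm_le_potential f 0 x)

def choice (x : List Bool) : Bool :=
  if disc x = 0 then false else if potential f (x ++ [false]) ≤ potential f x then false else true

def path : ℕ → List Bool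
  | 0 => []
  | n + 1 => path n ++ [choice f (path n)]

def seq (n : ℕ) : Bool := choice f (path f n)

theorem potential_append_choice_le (x : List Bool) :
    potential f (x ++ [choice f x]) ≤ potential f x := by
  have hM := biasedSupermartingale_potential f
  unfold choice
  split_ifs with h0 h1
  · exact hM.apply_append_false_le (if_pos h0)
  · exact h1
  · refine hM.apply_append_true_le (bias_pos x).le ?_ (not_le.1 h1)
    rw [bias, if_neg h0]
    linarith [drift_le_half x.length]

theorem potential_path_le (n : ℕ) : potential f (path f n) ≤ potential f [] := by
  induction n with
  | zero => rfl
  | succ n ih => exact (potential_append_choice_le f _).trans ih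

theorem length_path (n : ℕ) : (path f n).length = n := by
  induction n with
  | zero => rfl
  | succ n ih => simp [path, ih]

@[to_additive]
theorem stepProd_path {M : Type*} [CommMonoid M] (F : List Bool → Bool → M) (n : ℕ) :
    stepProd F (path f n) = ∏ i ∈ range n, F (path f i) (seq f i) := by
  induction n with
  | zero => rfl
  | succ n ih => rw [path, stepProd_append, ih, prod_range_succ, seq]

theorem path_eq_prefixFn (n : ℕ) : path f n = prefixFn (seq f) n := by
  induction n with
  | zero => rfl
  | succ n ih =>
    rw [path, prefixFn_succ, ← ih]
    rfl

theorem disc_path_nonneg (n : ℕ) : 0 ≤ disc (path f n) := by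
  induction n with
  | zero => rfl
  | succ n ih =>
    rw [path, disc, stepSum_append, ← disc]
    by_cases h : disc (path f n) = 0
    · simp [choice, h, sgn]
    · cases choice f (path f n) <;> simp only [sgn] <;> omega

theorem card_filter_true_le_card_filter_false (n : ℕ) :
    #{i ∈ range n | seq f i = true} ≤ #{i ∈ range n | seq f i = false} := by
  have := disc_path_nonneg f n
  rw [disc, stepSum_path, sum_range_sgn] at this
  omega

theorem pow_mul_one_add_mul_le_one {a : ℝ} (h0 : 0 ≤ a) (h1 : a ≤ 1) (n : ℕ) :
    (1 - a) ^ n * (1 + n * a) ≤ 1 :=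
  calc (1 - a) ^ n * (1 + n * a) ≤ (1 - a) ^ n * (1 + a) ^ n :=
        mul_le_mul_of_nonneg_left (one_add_mul_le_pow (by linarith) n)
          (pow_nonneg (by linarith) n)
    _ = (1 - a ^ 2) ^ n := by rw [← mul_pow]; ring
    _ ≤ 1 := pow_le_one₀ (by nlinarith) (by nlinarith)

/-- At a tie the global term at scale `theta m = drift n / 2` is `1 / ∏ globalCost`, and every
factor of the product is at most `1 - theta m ^ 2 / 2`. -/
theorem mul_drift_pow_three_le {n : ℕ} (h : disc (path f n) = 0) :
    n * drift n ^ 3 ≤ 16 * potential f [] := by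
  set m := driftExp n + 1
  set θ := theta m
  have hdrift : drift n = 2 * θ := (two_mul_theta_succ _).symm
  have hcost : ∏ i ∈ range n, globalCost m (path f i) ≤ (1 - θ ^ 2 / 2) ^ n := by
    refine (prod_le_prod (fun i _ => (globalCost_pos m _).le) fun i hi => globalCost_le ?_).trans
      (by rw [prod_const, card_range])
    calc 2 * θ = drift n := hdrift.symm
      _ ≤ drift (path f i).length :=
          drift_antitone <| (length_path f i).trans_le (mem_range.1 hi).le
      _ ≤ bias (path f i) := drift_le_bias _
  have hterm : θ ≤ potential f [] * ∏ i ∈ range n, globalCost m (path f i) := by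
    have := (globalTerm_le_potential f m _).trans (potential_path_le f n)
    rwa [globalTerm, expProc, ← disc, h, zpow_zero, stepProd_path, mul_one_div,
      div_le_iff₀ (prod_pos fun i _ => globalCost_pos m _)] at this
  have hθ : 0 < θ := theta_pos m
  have hpot := (potential_pos f []).le
  have hbound : θ * (1 + n * (θ ^ 2 / 2)) ≤ potential f [] :=
    calc θ * (1 + n * (θ ^ 2 / 2))
        ≤ (potential f [] * ∏ i ∈ range n, globalCost m (path f i)) * (1 + n * (θ ^ 2 / 2)) :=
          mul_le_mul_of_nonneg_right hterm (by positivity)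
      _ ≤ potential f [] * ((1 - θ ^ 2 / 2) ^ n * (1 + n * (θ ^ 2 / 2))) := by
          rw [mul_assoc]; gcongr
      _ ≤ potential f [] * 1 := by
          gcongr
          exact pow_mul_one_add_mul_le_one (by positivity) (by nlinarith [theta_le_one m]) n
      _ = potential f [] := mul_one _
  rw [hdrift]
  nlinarith

theorem eventually_disc_path_ne_zero : ∀ᶠ n in atTop, disc (path f n) ≠ 0 :=
  (tendsto_mul_drift_pow_three.eventually_gt_atTop (16 * potential f [])).mono
    fun _ hn h => (mul_drift_pow_three_le f h).not_gt hn

theorem tendsto_bias_path : Tendsto (fun n => bias (path f n)) atTop (𝓝 0) :=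
  tendsto_drift.congr' <| (eventually_disc_path_ne_zero f).mono fun n hn => by
    simp only [bias, if_neg hn, length_path]

theorem rho_zpow_abs_le_ruleTerm_mul (g : List Bool → Bool) (m : ℕ) (x : List Bool) :
    rho m ^ |stepSum (ruleIncr g) x| ≤
      ruleTerm g m x * stepProd (fun y _ => ruleCost g m y) x := by
  have hB : 0 < stepProd (fun y _ => ruleCost g m y) x := prod_pos fun _ _ => ruleCost_pos g m _
  rw [ruleTerm, expProc, expProc, ← add_div, div_mul_cancel₀ _ hB.ne', inv_zpow']
  rcases abs_choice (stepSum (ruleIncr g) x) with h | h <;> rw [h]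
  · linarith [zpow_pos (rho_pos m) (-stepSum (ruleIncr g) x)]
  · linarith [zpow_pos (rho_pos m) (stepSum (ruleIncr g) x)]

/-- Take logarithms in `theta j * theta m * ruleTerm (f j) m ≤ potential f []`. -/
theorem abs_sum_ruleIncr_mul_le (j m n : ℕ) :
    |((∑ i ∈ range n, ruleIncr (f j) (path f i) (seq f i) : ℤ) : ℝ)| * (theta m / 2) ≤
      Real.log (potential f [] / (theta j * theta m)) +
        ∑ i ∈ range n,
          if f j (path f i) then theta m ^ 2 / 2 + theta m * bias (path f i) else 0 := by
  have hθ : 0 < theta j * theta m := mul_pos (theta_pos j) (theta_pos m)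
  have hB : 0 < ∏ i ∈ range n, ruleCost (f j) m (path f i) :=
    prod_pos fun _ _ => ruleCost_pos _ m _
  have hexp : rho m ^ |∑ i ∈ range n, ruleIncr (f j) (path f i) (seq f i)| ≤
      potential f [] / (theta j * theta m) * ∏ i ∈ range n, ruleCost (f j) m (path f i) := by
    have := rho_zpow_abs_le_ruleTerm_mul (f j) m (path f n)
    rw [stepSum_path, stepProd_path] at this
    refine this.trans (mul_le_mul_of_nonneg_right ?_ hB.le)
    rw [le_div_iff₀ hθ, mul_comm]
    exact (ruleTerm_le_potential f j m _).trans (potential_path_le f n)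
  have hlog := Real.log_le_log (zpow_pos (rho_pos m) _) hexp
  rw [Real.log_zpow, Real.log_mul (div_pos (potential_pos f []) hθ).ne' hB.ne',
    Real.log_prod (fun i _ => (ruleCost_pos _ m _).ne')] at hlog
  have hcost := sum_le_sum fun i (_ : i ∈ range n) => log_ruleCost_le (f j) m (path f i)
  have habs := mul_le_mul_of_nonneg_left (half_theta_le_log_rho m) (abs_nonneg
    ((∑ i ∈ range n, ruleIncr (f j) (path f i) (seq f i) : ℤ) : ℝ))
  push_cast at hlog habs ⊢
  linarith

theorem sum_ite_path_eq_sum_nth {M : Type*} [AddCommMonoid M] (g : List Bool → Bool)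
    (hinf : (SelectedIndices g (seq f)).Infinite) (F : ℕ → M) (K : ℕ) :
    ∑ i ∈ range (Nat.nth (· ∈ SelectedIndices g (seq f)) K), (if g (path f i) then F i else 0) =
      ∑ k ∈ range K, F (Nat.nth (· ∈ SelectedIndices g (seq f)) k) := by
  rw [← sum_filter_range_nth (p := (· ∈ SelectedIndices g (seq f))) hinf, sum_filter]
  simp only [path_eq_prefixFn]
  rfl

theorem limitFreq_selectedSeq (j : ℕ) (hinf : (SelectedIndices (f j) (seq f)).Infinite) :
    LimitFreq (SelectedSeq (f j) (seq f)) (1 / 2) := by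
  set P : ℕ → Prop := (· ∈ SelectedIndices (f j) (seq f))
  have hdisc (K : ℕ) : ∑ k ∈ range K, sgn (SelectedSeq (f j) (seq f) k) =
      ∑ i ∈ range (Nat.nth P K), ruleIncr (f j) (path f i) (seq f i) :=
    (sum_ite_path_eq_sum_nth f (f j) hinf (fun i => sgn (seq f i)) K).symm
  have hbias : Tendsto (fun k => 2 * bias (path f (Nat.nth P k))) atTop (𝓝 0) := by
    rw [← mul_zero (2 : ℝ)]
    exact ((tendsto_bias_path f).comp (Nat.nth_strictMono hinf).tendsto_atTop).const_mul 2
  refine limitFreq_half_of_tendsto <| tendsto_div_of_abs_le tendsto_theta hbias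
    (C := fun m => 2 * Real.log (potential f [] / (theta j * theta m)) / theta m) fun m K => ?_
  have h := abs_sum_ruleIncr_mul_le f j m (Nat.nth P K)
  rw [sum_ite_path_eq_sum_nth f (f j) hinf (fun i => theta m ^ 2 / 2 + theta m * bias (path f i)),
    sum_add_distrib, sum_const, card_range, nsmul_eq_mul, ← mul_sum, ← hdisc] at h
  rw [← mul_sum]
  have hθ := theta_pos m
  refine le_of_mul_le_mul_right (h.trans_eq ?_) (half_pos hθ)
  field_simp
  ring

end

end Ville

/-- **Ville's theorem.** For every countable family `S` of selection rules there is a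
sequence `ω` with limit frequency `1/2`, satisfying requirement II (with limit `1/2`)
for every rule in `S`, every prefix of which has at least as many `false`s (zeros) as
`true`s (ones). -/
theorem ville_example (S : Set (List Bool → Bool)) (hS : S.Countable) :
    ∃ ω : ℕ → Bool, LimitFreq ω (1 / 2) ∧ (∀ s ∈ S, SatisfiesII s ω (1 / 2)) ∧
      ∀ n : ℕ, ((Finset.range n).filter fun i => ω i = true).card ≤
        ((Finset.range n).filter fun i => ω i = false).card := by
  obtain ⟨f, hf⟩ := (hS.insert fun _ => true).exists_eq_range (Set.insert_nonempty _ _)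
  have hrange {s} (hs : s ∈ insert (fun _ => true) S) : ∃ j, f j = s := by rwa [hf] at hs
  refine ⟨Ville.seq f, ?_, fun s hs => ?_, Ville.card_filter_true_le_card_filter_false f⟩
  · obtain ⟨j, hj⟩ := hrange (Set.mem_insert _ _)
    have := Ville.limitFreq_selectedSeq f j (by simp [hj, SelectedIndices, Set.infinite_univ])
    rwa [hj, Ville.selectedSeq_const_true] at this
  · obtain ⟨j, rfl⟩ := hrange (Set.mem_insert_of_mem _ hs)
    exact (SelectedIndices (f j) _).finite_or_infinite.imp_right (Ville.limitFreq_selectedSeq f j)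
end

section
/- For every martingale m, the set of all sequences ω : ℕ → Bool against which m wins is a null set for the uniform measure on the Cantor space ℕ → Bool. -/
open Filter MeasureTheory Set
open scoped ENNReal

/-!
Ville's inequality: if `m` is a nonnegative supermartingale and `C > 0`, the sequences along
which `m` ever exceeds `C` have measure at most `m [] / C`. They are covered by the cylinders of
the minimal strings at which `m` exceeds `C`. These strings form a prefix-free set, and for every
finite prefix-free `F` the averaging inequality gives `∑_{w ∈ F} 2^{-|w|} m w ≤ m []` (split `F`
by the first bit and induct on the lengths). A winning sequence exceeds every `C`, so letting
`C → ∞` shows that the winning set is null.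
-/

@[simp]
theorem prefixFn_length (ω : ℕ → Bool) (n : ℕ) : (prefixFn ω n).length = n := by
  simp [prefixFn]

theorem prefixFn_take (ω : ℕ → Bool) {k n : ℕ} (h : k ≤ n) :
    (prefixFn ω n).take k = prefixFn ω k :=
  List.ext_getElem (by simp [h]) fun _ _ _ => by simp [prefixFn]

theorem mem_cyl_prefixFn (ω : ℕ → Bool) (n : ℕ) : ω ∈ cyl (prefixFn ω n) := by
  simp [cyl]

def IsPrefixFree {α : Type*} (S : Set (List α)) : Prop :=
  ∀ ⦃v⦄, v ∈ S → ∀ ⦃w⦄, w ∈ S → v <+: w → v = w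

namespace IsPrefixFree

variable {α : Type*} {S : Set (List α)}

theorem mono {T : Set (List α)} (hS : IsPrefixFree S) (hTS : T ⊆ S) : IsPrefixFree T :=
  fun _ hv _ hw => hS (hTS hv) (hTS hw)

theorem preimage_cons (hS : IsPrefixFree S) (a : α) : IsPrefixFree (List.cons a ⁻¹' S) :=
  fun _ hv _ hw hvw => List.cons_injective (hS hv hw (List.cons_prefix_cons.mpr ⟨rfl, hvw⟩))

theorem eq_singleton_nil (hS : IsPrefixFree S) (h : [] ∈ S) : S = {[]} :=
  Set.eq_singleton_iff_unique_mem.mpr ⟨h, fun _ hw => (hS h hw List.nil_prefix).symm⟩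

end IsPrefixFree

theorem Finset.sum_eq_sum_sum_preimage_cons {α M : Type*} [Fintype α] [AddCommMonoid M]
    {F : Finset (List α)} (hF : [] ∉ F) (f : List α → M) :
    ∑ w ∈ F, f w =
      ∑ a, ∑ u ∈ F.preimage (a :: ·) List.cons_injective.injOn, f (a :: u) := by
  rw [Finset.sum_sigma']
  exact (Finset.sum_bij' (fun p _ => p.1 :: p.2)
    (fun w hw => ⟨w.head (ne_of_mem_of_not_mem hw hF), w.tail⟩)
    (by simp) (by simp) (by simp) (by simp) (by simp)).symm

theorem IsMartingale.isSupermartingale {m : List Bool → ℝ} (hm : IsMartingale m) :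
    IsSupermartingale m :=
  ⟨hm.1, fun x => (hm.2 x).ge⟩

namespace IsSupermartingale

variable {m : List Bool → ℝ}

theorem sum_div_pow_le_of_length_lt (hm : IsSupermartingale m) {n : ℕ} {F : Finset (List Bool)}
    (hF : IsPrefixFree (F : Set (List Bool))) (hlen : ∀ w ∈ F, w.length < n) (x : List Bool) :
    ∑ w ∈ F, m (x ++ w) / 2 ^ w.length ≤ m x := by
  induction n generalizing F x with
  | zero =>
    have hF_empty : F = ∅ := Finset.eq_empty_of_forall_notMem fun w hw => by
      simpa using hlen w hw
    simp [hF_empty, hm.1 x]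
  | succ n ih =>
    by_cases hnil : [] ∈ F
    · rw [Finset.coe_eq_singleton.mp (hF.eq_singleton_nil hnil)]
      simp
    rw [Finset.sum_eq_sum_sum_preimage_cons hnil]
    calc ∑ b, ∑ u ∈ F.preimage (b :: ·) _, m (x ++ b :: u) / 2 ^ (b :: u).length
        = ∑ b, (∑ u ∈ F.preimage (b :: ·) List.cons_injective.injOn,
            m (x ++ [b] ++ u) / 2 ^ u.length) / 2 := by
          simp [Finset.sum_div, pow_succ, div_div]
      _ ≤ ∑ b, m (x ++ [b]) / 2 := by
          gcongr with b
          refine ih (by simpa using hF.preimage_cons b) (fun u hu => ?_) _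
          simpa using hlen _ (Finset.mem_preimage.mp hu)
      _ ≤ m x := by simpa [add_div, add_comm] using hm.2 x

theorem sum_div_pow_le (hm : IsSupermartingale m) {F : Finset (List Bool)}
    (hF : IsPrefixFree (F : Set (List Bool))) (x : List Bool) :
    ∑ w ∈ F, m (x ++ w) / 2 ^ w.length ≤ m x :=
  hm.sum_div_pow_le_of_length_lt hF (fun _ hw => Nat.lt_succ_of_le (F.le_sup hw)) x

theorem mul_sum_inv_pow_le (hm : IsSupermartingale m) {F : Finset (List Bool)}
    (hF : IsPrefixFree (F : Set (List Bool))) {C : ℝ} (hC : ∀ w ∈ F, C ≤ m w) :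
    C * ∑ w ∈ F, ((2 : ℝ) ^ w.length)⁻¹ ≤ m [] :=
  calc C * ∑ w ∈ F, ((2 : ℝ) ^ w.length)⁻¹ = ∑ w ∈ F, C / 2 ^ w.length := by
        simp [Finset.mul_sum, div_eq_mul_inv]
    _ ≤ ∑ w ∈ F, m ([] ++ w) / 2 ^ w.length := by
        gcongr with w hw
        exact hC w hw
    _ ≤ m [] := hm.sum_div_pow_le hF []

theorem tsum_inv_pow_le (hm : IsSupermartingale m) {S : Set (List Bool)} (hS : IsPrefixFree S)
    {C : ℝ} (hC : 0 < C) (hSC : ∀ w ∈ S, C ≤ m w) :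
    ∑' w : S, ((2 : ℝ≥0∞) ^ (w : List Bool).length)⁻¹ ≤ ENNReal.ofReal (m [] / C) := by
  classical
  rw [tsum_subtype S fun w => ((2 : ℝ≥0∞) ^ w.length)⁻¹]
  refine ENNReal.summable.tsum_le_of_sum_le fun F => ?_
  have hpow (n : ℕ) : ((2 : ℝ≥0∞) ^ n)⁻¹ = ENNReal.ofReal ((2 : ℝ) ^ n)⁻¹ := by
    rw [ENNReal.ofReal_inv_of_pos (by positivity), ENNReal.ofReal_pow zero_le_two]
    simp
  have hFS : ∀ w ∈ F.filter (· ∈ S), w ∈ S := fun _ hw => (Finset.mem_filter.mp hw).2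
  rw [Finset.sum_indicator_eq_sum_filter]
  simp only [hpow]
  rw [← ENNReal.ofReal_sum_of_nonneg fun _ _ => by positivity]
  refine ENNReal.ofReal_le_ofReal ((le_div_iff₀' hC).mpr ?_)
  exact hm.mul_sum_inv_pow_le (hS.mono hFS) fun w hw => hSC w (hFS w hw)

end IsSupermartingale

def firstExceeding (m : List Bool → ℝ) (C : ℝ) : Set (List Bool) :=
  {w | C < m w ∧ ∀ k < w.length, m (w.take k) ≤ C}

theorem isPrefixFree_firstExceeding (m : List Bool → ℝ) (C : ℝ) :
    IsPrefixFree (firstExceeding m C) := by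
  intro v hv w hw hvw
  by_contra hne
  have hlt : v.length < w.length := hvw.length_le.lt_of_ne fun h => hne (hvw.eq_of_length h)
  have hle := hw.2 _ hlt
  rw [← List.prefix_iff_eq_take.mp hvw] at hle
  exact hle.not_gt hv.1

theorem setOf_exists_lt_subset_iUnion_cyl (m : List Bool → ℝ) (C : ℝ) :
    {ω | ∃ n, C < m (prefixFn ω n)} ⊆ ⋃ w ∈ firstExceeding m C, cyl w := by
  intro ω hω
  refine mem_iUnion₂.mpr ⟨prefixFn ω (Nat.find hω), ⟨Nat.find_spec hω, fun k hk => ?_⟩,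
    mem_cyl_prefixFn ω _⟩
  rw [prefixFn_length] at hk
  rw [prefixFn_take ω hk.le]
  exact not_lt.mp (Nat.find_min hω hk)

theorem IsSupermartingale.measure_exists_lt_le {m : List Bool → ℝ} (hm : IsSupermartingale m)
    {μ : Measure (ℕ → Bool)} (hμ : IsUniformMeasure μ) {C : ℝ} (hC : 0 < C) :
    μ {ω | ∃ n, C < m (prefixFn ω n)} ≤ ENNReal.ofReal (m [] / C) :=
  calc μ {ω | ∃ n, C < m (prefixFn ω n)}
      ≤ μ (⋃ w ∈ firstExceeding m C, cyl w) :=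
        measure_mono (setOf_exists_lt_subset_iUnion_cyl m C)
    _ ≤ ∑' w : firstExceeding m C, μ (cyl w) := measure_biUnion_le μ (to_countable _) _
    _ = ∑' w : firstExceeding m C, ((2 : ℝ≥0∞) ^ (w : List Bool).length)⁻¹ :=
        tsum_congr fun w => hμ w
    _ ≤ ENNReal.ofReal (m [] / C) :=
        hm.tsum_inv_pow_le (isPrefixFree_firstExceeding m C) hC fun _ hw => hw.1.le

/-- For every martingale `m`, the set of sequences against which `m` wins is null for
the uniform measure on Cantor space. -/
theorem martingale_winning_set_null (m : List Bool → ℝ) (hm : IsMartingale m)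
    (μ : Measure (ℕ → Bool)) (hμ : IsUniformMeasure μ) :
    μ {ω : ℕ → Bool | Wins m ω} = 0 := by
  have hbound : ∀ᶠ C in atTop, μ {ω | Wins m ω} ≤ ENNReal.ofReal (m [] / C) :=
    (eventually_gt_atTop 0).mono fun C hC => (measure_mono fun ω (hω : Wins m ω) => hω C).trans
      (hm.isSupermartingale.measure_exists_lt_le hμ hC)
  have hlim : Tendsto (fun C : ℝ => ENNReal.ofReal (m [] / C)) atTop (nhds 0) := by
    simpa using ENNReal.tendsto_ofReal (tendsto_const_nhds.div_atTop tendsto_id)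
  exact nonpos_iff_eq_zero.mp (ge_of_tendsto hlim hbound)
end

section
/- Martingales generalize selection rules: for every selection rule s there exists a martingale m such that m wins against every sequence ω : ℕ → Bool for which the subsequence selected by s from ω is infinite and does not have limit frequency 1/2. -/
open Filter MeasureTheory Set
open scoped ENNReal

/-!
Betting on the bits chosen by `s` as if they were Bernoulli(`p`) multiplies the capital by `2p`
at each selected `true` and by `2(1-p)` at each selected `false`. After `M` selections of which
`T` are `true` the capital is `(2p)^T (2(1-p))^(M-T)`, at least `exp (M (log 2 - H(p)))` when
`T ≥ pM`, where `H = binEntropy` and `log 2 - H(p) > 0` for `p ≠ 1/2`. If the selected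
frequencies do not tend to `1/2`, then for some `p` of the countable family `1/2 + 1/(k+3)`
infinitely often `T ≥ pM` or `M - T ≥ pM`, so betting with forecast `p` or `1 - p` grows
exponentially along `ω`. The sum of these martingales with weights `2^-k` wins against every
such `ω`.
-/

theorem IsMartingale.add {m m' : List Bool → ℝ} (hm : IsMartingale m) (hm' : IsMartingale m') :
    IsMartingale (m + m') :=
  ⟨fun x => add_nonneg (hm.1 x) (hm'.1 x), fun x => by
    simp only [Pi.add_apply]; rw [hm.2 x, hm'.2 x]; ring⟩

theorem isMartingale_tsum {ι : Type*} {w : ι → ℝ} {m : ι → List Bool → ℝ} (hw : ∀ i, 0 ≤ w i)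
    (hm : ∀ i, IsMartingale (m i)) (hsum : ∀ x, Summable fun i => w i * m i x) :
    IsMartingale fun x => ∑' i, w i * m i x := by
  refine ⟨fun x => tsum_nonneg fun i => mul_nonneg (hw i) ((hm i).1 x), fun x => ?_⟩
  rw [← (hsum _).tsum_add (hsum _), ← tsum_div_const]
  refine tsum_congr fun i => ?_
  rw [(hm i).2 x]
  ring

namespace SelectionMartingale

open Real

theorem count_and_add_count_and_not (p r : ℕ → Prop) [DecidablePred p] [DecidablePred r]
    (n : ℕ) : Nat.count (fun i => p i ∧ r i) n + Nat.count (fun i => p i ∧ ¬ r i) n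
      = Nat.count p n := by
  simp only [Nat.count_eq_card_filter_range, ← Finset.filter_filter]
  exact Finset.card_filter_add_card_filter_not _

theorem count_comp_nth_count (p r : ℕ → Prop) [DecidablePred p] [DecidablePred r] (n : ℕ) :
    Nat.count (fun j => r (Nat.nth p j)) (Nat.count p n) = Nat.count (fun i => p i ∧ r i) n := by
  induction n with
  | zero => simp
  | succ n ih =>
    by_cases hp : p n
    · simp [Nat.count_succ, hp, Nat.nth_count hp, ih]
    · simp [Nat.count_succ, hp, ih]

theorem prefixFn_succ (ω : ℕ → Bool) (n : ℕ) : prefixFn ω (n + 1) = prefixFn ω n ++ [ω n] := by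
  simp only [prefixFn, List.ofFn_succ', List.concat_eq_append, Fin.val_castSucc, Fin.val_last]

noncomputable def betGain (q : ℝ) : Bool → ℝ
  | true => 2 * q
  | false => 2 * (1 - q)

theorem betGain_nonneg {q : ℝ} (hq : q ∈ Icc 0 1) (c : Bool) : 0 ≤ betGain q c := by
  cases c <;> simp only [betGain] <;> linarith [hq.1, hq.2]

theorem betGain_le_two {q : ℝ} (hq : q ∈ Icc 0 1) (c : Bool) : betGain q c ≤ 2 := by
  cases c <;> simp only [betGain] <;> linarith [hq.1, hq.2]

/-- The capital, starting from `1`, of a gambler who after seeing `y` forecasts the next bit to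
be `true` with probability `q y`: the likelihood ratio of the forecast measure against the fair
coin on `x`. -/
noncomputable def capital (q : List Bool → ℝ) (x : List Bool) : ℝ :=
  ∏ i ∈ Finset.range x.length, betGain (q (x.take i)) (x.getD i false)

theorem capital_append_singleton (q : List Bool → ℝ) (x : List Bool) (c : Bool) :
    capital q (x ++ [c]) = capital q x * betGain (q x) c := by
  simp only [capital, List.length_append, List.length_singleton, Finset.prod_range_succ,
    List.take_left', List.getD_append_right, le_refl, Nat.sub_self]
  congr 1
  refine Finset.prod_congr rfl fun i hi => ?_
  have hi : i < x.length := Finset.mem_range.1 hi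
  rw [List.take_append_of_le_length hi.le, List.getD_append _ _ _ _ hi]

section Capital

variable {q : List Bool → ℝ}

theorem capital_nonneg (hq : ∀ x, q x ∈ Icc 0 1) (x : List Bool) : 0 ≤ capital q x :=
  Finset.prod_nonneg fun _ _ => betGain_nonneg (hq _) _

theorem capital_le_two_pow (hq : ∀ x, q x ∈ Icc 0 1) (x : List Bool) :
    capital q x ≤ 2 ^ x.length := by
  calc capital q x ≤ ∏ _i ∈ Finset.range x.length, (2 : ℝ) :=
        Finset.prod_le_prod (fun _ _ => betGain_nonneg (hq _) _)
          fun _ _ => betGain_le_two (hq _) _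
    _ = 2 ^ x.length := by rw [Finset.prod_const, Finset.card_range]

theorem isMartingale_capital (hq : ∀ x, q x ∈ Icc 0 1) : IsMartingale (capital q) := by
  refine ⟨capital_nonneg hq, fun x => ?_⟩
  rw [capital_append_singleton, capital_append_singleton]
  simp only [betGain]
  ring

end Capital

noncomputable def selectionForecast (s : List Bool → Bool) (p : ℝ) (x : List Bool) : ℝ :=
  if s x then p else 1 / 2

theorem selectionForecast_mem_Icc (s : List Bool → Bool) {p : ℝ} (hp : p ∈ Icc 0 1)
    (x : List Bool) : selectionForecast s p x ∈ Icc 0 1 := by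
  unfold selectionForecast
  split_ifs
  exacts [hp, ⟨by norm_num, by norm_num⟩]

theorem capital_selectionForecast_prefixFn (s : List Bool → Bool) (p : ℝ) (ω : ℕ → Bool)
    (n : ℕ) : capital (selectionForecast s p) (prefixFn ω n)
      = (2 * p) ^ Nat.count (fun i => s (prefixFn ω i) ∧ ω i) n
        * (2 * (1 - p)) ^ Nat.count (fun i => s (prefixFn ω i) ∧ ¬ ω i) n := by
  induction n with
  | zero => rw [Nat.count_zero, Nat.count_zero]; simp [capital, prefixFn]
  | succ n ih =>
    rw [prefixFn_succ, capital_append_singleton, ih, selectionForecast, Nat.count_succ,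
      Nat.count_succ]
    cases s (prefixFn ω n) <;> cases ω n <;> grind [betGain]

theorem capital_selectionForecast_nth (s : List Bool → Bool) (p : ℝ) {ω : ℕ → Bool}
    (hinf : (SelectedIndices s ω).Infinite) (M : ℕ) :
    capital (selectionForecast s p) (prefixFn ω (Nat.nth (· ∈ SelectedIndices s ω) M))
      = (2 * p) ^ Nat.count (fun j => SelectedSeq s ω j) M
        * (2 * (1 - p)) ^ (M - Nat.count (fun j => SelectedSeq s ω j) M) := by
  set sel : ℕ → Prop := fun i => s (prefixFn ω i)
  have hM : Nat.count sel (Nat.nth sel M) = M := Nat.count_nth_of_infinite hinf M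
  have hT := count_comp_nth_count sel (fun i => ω i) (Nat.nth sel M)
  have hF := count_and_add_count_and_not sel (fun i => ω i) (Nat.nth sel M)
  rw [hM] at hT hF
  rw [capital_selectionForecast_prefixFn]
  change (2 * p) ^ Nat.count _ (Nat.nth sel M) * (2 * (1 - p)) ^ Nat.count _ (Nat.nth sel M)
    = (2 * p) ^ Nat.count (fun j => ω (Nat.nth sel j)) M
      * (2 * (1 - p)) ^ (M - Nat.count (fun j => ω (Nat.nth sel j)) M)
  rw [hT, Nat.eq_sub_of_add_eq' hF]

theorem exp_mul_log_two_sub_binEntropy_le {p : ℝ} (hp : 1 / 2 ≤ p) (hp₁ : p < 1) {A M : ℕ}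
    (hAM : A ≤ M) (hA : p * M ≤ A) :
    exp (M * (log 2 - binEntropy p)) ≤ (2 * p) ^ A * (2 * (1 - p)) ^ (M - A) := by
  have h2p : 0 < 2 * p := by linarith
  have h2q : 0 < 2 * (1 - p) := by linarith
  have hlog : log (2 * (1 - p)) ≤ log (2 * p) := log_le_log h2q (by linarith)
  have hD : log 2 - binEntropy p = p * log (2 * p) + (1 - p) * log (2 * (1 - p)) := by
    rw [binEntropy, log_inv, log_inv, log_mul two_ne_zero (by linarith),
      log_mul two_ne_zero (by linarith)]
    ring
  rw [← exp_log (by positivity : 0 < (2 * p) ^ A * (2 * (1 - p)) ^ (M - A)), exp_le_exp,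
    log_mul (by positivity) (by positivity), log_pow, log_pow, Nat.cast_sub hAM, hD]
  nlinarith [mul_nonneg (sub_nonneg.2 hA) (sub_nonneg.2 hlog)]

noncomputable def biasedProb (k : ℕ) : ℝ := 1 / 2 + 1 / (k + 3)

theorem half_lt_biasedProb (k : ℕ) : 1 / 2 < biasedProb k := by
  unfold biasedProb
  have : (0 : ℝ) < 1 / (k + 3) := by positivity
  linarith

theorem biasedProb_lt_one (k : ℕ) : biasedProb k < 1 := by
  unfold biasedProb
  have : 1 / ((k : ℝ) + 3) ≤ 1 / 3 := one_div_le_one_div_of_le (by norm_num) (by simp)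
  linarith

theorem exists_frequently_biased {α : ℕ → Bool} (h : ¬ LimitFreq α (1 / 2)) :
    ∃ k, ∀ N, ∃ M ≥ N, biasedProb k * M ≤ Nat.count (fun i => α i) M ∨
      biasedProb k * M ≤ (M - Nat.count (fun i => α i) M : ℕ) := by
  simp only [LimitFreq, Metric.tendsto_atTop, not_forall, not_exists, not_lt, exists_prop] at h
  obtain ⟨ε, hε, hdev⟩ := h
  obtain ⟨k, hk⟩ := exists_nat_one_div_lt hε
  have hpε : biasedProb k ≤ 1 / 2 + ε := by
    have : 1 / ((k : ℝ) + 3) ≤ 1 / (k + 1) := one_div_le_one_div_of_le (by positivity) (by linarith)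
    unfold biasedProb
    linarith
  refine ⟨k, fun N => ?_⟩
  obtain ⟨M, hM, hεM⟩ := hdev (max N 1)
  have hM0 : (0 : ℝ) < M := by exact_mod_cast le_of_max_le_right hM
  have hpM : biasedProb k * M ≤ (1 / 2 + ε) * M := mul_le_mul_of_nonneg_right hpε hM0.le
  refine ⟨M, le_of_max_le_left hM, ?_⟩
  rw [Real.dist_eq, ← Nat.count_eq_card_filter_range] at hεM
  rw [Nat.cast_sub (Nat.count_le _)]
  set T : ℝ := (Nat.count (fun i => α i) M : ℝ)
  rcases le_abs.1 hεM with hhigh | hlow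
  · have := (le_div_iff₀ hM0).1 (by linarith : 1 / 2 + ε ≤ T / M)
    exact Or.inl (by linarith)
  · have := (div_le_iff₀ hM0).1 (by linarith : T / M ≤ 1 / 2 - ε)
    exact Or.inr (by linarith)

noncomputable def twoSidedCapital (s : List Bool → Bool) (p : ℝ) : List Bool → ℝ :=
  capital (selectionForecast s p) + capital (selectionForecast s (1 - p))

section TwoSided

variable {s : List Bool → Bool} {p : ℝ}

theorem isMartingale_twoSidedCapital (hp : p ∈ Icc 0 1) : IsMartingale (twoSidedCapital s p) :=
  IsMartingale.add (isMartingale_capital (selectionForecast_mem_Icc s hp))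
    (isMartingale_capital (selectionForecast_mem_Icc s (Icc.mem_iff_one_sub_mem.1 hp)))

theorem twoSidedCapital_le (hp : p ∈ Icc 0 1) (x : List Bool) :
    twoSidedCapital s p x ≤ 2 * 2 ^ x.length := by
  have := capital_le_two_pow (selectionForecast_mem_Icc s hp) x
  have := capital_le_two_pow (selectionForecast_mem_Icc s (Icc.mem_iff_one_sub_mem.1 hp)) x
  simp only [twoSidedCapital, Pi.add_apply]
  linarith

theorem exp_le_twoSidedCapital_nth (hp : 1 / 2 ≤ p) (hp₁ : p < 1) {ω : ℕ → Bool}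
    (hinf : (SelectedIndices s ω).Infinite) {M : ℕ}
    (hbias : p * M ≤ Nat.count (fun j => SelectedSeq s ω j) M ∨
      p * M ≤ (M - Nat.count (fun j => SelectedSeq s ω j) M : ℕ)) :
    exp (M * (log 2 - binEntropy p)) ≤
      twoSidedCapital s p (prefixFn ω (Nat.nth (· ∈ SelectedIndices s ω) M)) := by
  simp only [twoSidedCapital, Pi.add_apply, capital_selectionForecast_nth _ _ hinf, sub_sub_cancel]
  set T := Nat.count (fun j => SelectedSeq s ω j) M
  have hT : T ≤ M := Nat.count_le _
  have hq : 0 ≤ 1 - p := by linarith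
  have h₁ : 0 ≤ (2 * p) ^ T * (2 * (1 - p)) ^ (M - T) := by positivity
  have h₂ : 0 ≤ (2 * (1 - p)) ^ T * (2 * p) ^ (M - T) := by positivity
  rcases hbias with hhigh | hlow
  · linarith [exp_mul_log_two_sub_binEntropy_le hp hp₁ hT hhigh]
  · have := exp_mul_log_two_sub_binEntropy_le hp hp₁ (Nat.sub_le M T) hlow
    rw [Nat.sub_sub_self hT, mul_comm ((2 * p) ^ (M - T))] at this
    linarith

end TwoSided

noncomputable def selectionMixture (s : List Bool → Bool) (x : List Bool) : ℝ :=
  ∑' k : ℕ, (1 / 2) ^ k * twoSidedCapital s (biasedProb k) x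

theorem biasedProb_mem_Icc (k : ℕ) : biasedProb k ∈ Icc 0 1 :=
  ⟨by linarith [half_lt_biasedProb k], (biasedProb_lt_one k).le⟩

theorem summable_selectionMixture (s : List Bool → Bool) (x : List Bool) :
    Summable fun k : ℕ => (1 / 2 : ℝ) ^ k * twoSidedCapital s (biasedProb k) x :=
  Summable.of_nonneg_of_le
    (fun k => mul_nonneg (by positivity)
      ((isMartingale_twoSidedCapital (biasedProb_mem_Icc k)).1 x))
    (fun k => mul_le_mul_of_nonneg_left (twoSidedCapital_le (biasedProb_mem_Icc k) x)
      (by positivity))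
    (summable_geometric_two.mul_right _)

theorem isMartingale_selectionMixture (s : List Bool → Bool) :
    IsMartingale (selectionMixture s) :=
  isMartingale_tsum (fun k => by positivity)
    (fun k => isMartingale_twoSidedCapital (biasedProb_mem_Icc k))
    (summable_selectionMixture s)

theorem le_selectionMixture (s : List Bool → Bool) (k : ℕ) (x : List Bool) :
    (1 / 2) ^ k * twoSidedCapital s (biasedProb k) x ≤ selectionMixture s x :=
  (summable_selectionMixture s x).le_tsum k fun j _ =>
    mul_nonneg (by positivity) ((isMartingale_twoSidedCapital (biasedProb_mem_Icc j)).1 x)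

end SelectionMartingale

open SelectionMartingale Real

/-- **Martingales generalize selection rules.** For every selection rule `s` there is a
martingale winning against every sequence whose `s`-selected subsequence is infinite and
does not have limit frequency `1/2`. -/
theorem martingale_generalizes_selection (s : List Bool → Bool) :
    ∃ m : List Bool → ℝ, IsMartingale m ∧
      ∀ ω : ℕ → Bool, (SelectedIndices s ω).Infinite →
        ¬ LimitFreq (SelectedSeq s ω) (1 / 2) → Wins m ω := by
  refine ⟨selectionMixture s, isMartingale_selectionMixture s, fun ω hinf hfreq C => ?_⟩
  obtain ⟨k, hk⟩ := exists_frequently_biased hfreq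
  set p := biasedProb k
  have hD : 0 < log 2 - binEntropy p :=
    sub_pos.2 (binEntropy_lt_log_two.2 (by linarith [half_lt_biasedProb k]))
  obtain ⟨N, hN⟩ := eventually_atTop.1 <|
    (tendsto_exp_atTop.comp (tendsto_natCast_atTop_atTop.atTop_mul_const hD)).eventually_gt_atTop
      (2 ^ k * C)
  obtain ⟨M, hMN, hbias⟩ := hk N
  refine ⟨Nat.nth (· ∈ SelectedIndices s ω) M, ?_⟩
  calc C = (1 / 2) ^ k * (2 ^ k * C) := by rw [← mul_assoc, ← mul_pow]; norm_num
    _ < (1 / 2) ^ k * exp (M * (log 2 - binEntropy p)) :=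
        mul_lt_mul_of_pos_left (hN M hMN) (by positivity)
    _ ≤ (1 / 2) ^ k * twoSidedCapital s p (prefixFn ω (Nat.nth (· ∈ SelectedIndices s ω) M)) :=
        mul_le_mul_of_nonneg_left
          (exp_le_twoSidedCapital_nth (half_lt_biasedProb k).le (biasedProb_lt_one k) hinf hbias)
          (by positivity)
    _ ≤ selectionMixture s _ := le_selectionMixture s k _
end

section
/- Combining countably many martingales: let (m_i) for i ∈ ℕ be martingales with m_i [] ≤ 1 for all i, and let (α_i) be positive reals with ∑ α_i = 1. Then the function m defined by m x = ∑_{i} α_i · m_i x is well defined (the series converges for every x ∈ List Bool), m is a martingale, and m wins against every sequence ω : ℕ → Bool against which at least one of the m_i wins. -/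
open Filter MeasureTheory Set
open scoped ENNReal

/- A martingale at most doubles from one string to the next, so a martingale `m` with
`m [] ≤ 1` is bounded by `2 ^ |x|` at `x`; this makes the weighted sum converge. Being a
martingale is preserved under convergent nonnegative combinations, and the combination
dominates each of its terms, so it wins wherever some `m i` does, the weight `α i > 0`
only rescaling the bound. -/

namespace IsMartingale

variable {f : List Bool → ℝ}

lemma le_two_mul (hf : IsMartingale f) (x : List Bool) (b : Bool) :
    f (x ++ [b]) ≤ 2 * f x := by
  have hfalse := hf.1 (x ++ [false])
  have htrue := hf.1 (x ++ [true])
  cases b <;> linarith [hf.2 x]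

lemma le_two_pow_length_mul (hf : IsMartingale f) (x : List Bool) :
    f x ≤ 2 ^ x.length * f [] := by
  induction x using List.reverseRecOn with
  | nil => simp
  | append_singleton x b ih =>
    calc f (x ++ [b]) ≤ 2 * f x := hf.le_two_mul x b
      _ ≤ 2 * (2 ^ x.length * f []) := by linarith
      _ = 2 ^ (x ++ [b]).length * f [] := by
        rw [List.length_append, List.length_singleton, pow_succ]; ring

lemma summable_mul {m : ℕ → List Bool → ℝ} (hm : ∀ i, IsMartingale (m i))
    (hm1 : ∀ i, m i [] ≤ 1) {α : ℕ → ℝ} (hα : ∀ i, 0 ≤ α i) (hαs : Summable α)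
    (x : List Bool) : Summable fun i => α i * m i x := by
  refine (hαs.mul_right (2 ^ x.length)).of_nonneg_of_le
    (fun i => mul_nonneg (hα i) ((hm i).1 x)) fun i => mul_le_mul_of_nonneg_left ?_ (hα i)
  calc m i x ≤ 2 ^ x.length * m i [] := (hm i).le_two_pow_length_mul x
    _ ≤ 2 ^ x.length := mul_le_of_le_one_right (by positivity) (hm1 i)

lemma tsum_mul {m : ℕ → List Bool → ℝ} (hm : ∀ i, IsMartingale (m i)) {α : ℕ → ℝ}
    (hα : ∀ i, 0 ≤ α i) (hS : ∀ x, Summable fun i => α i * m i x) :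
    IsMartingale fun x => ∑' i, α i * m i x := by
  refine ⟨fun x => tsum_nonneg fun i => mul_nonneg (hα i) ((hm i).1 x), fun x => ?_⟩
  have hsplit : (fun i => α i * m i x) =
      fun i => (α i * m i (x ++ [false]) + α i * m i (x ++ [true])) / 2 := by
    funext i
    rw [(hm i).2 x]
    ring
  simp only [hsplit, tsum_div_const, (hS _).tsum_add (hS _)]

end IsMartingale

namespace Wins

variable {f g : List Bool → ℝ} {ω : ℕ → Bool}

lemma mono (hfg : ∀ x, f x ≤ g x) (hf : Wins f ω) : Wins g ω := fun C =>
  (hf C).imp fun _ hn => hn.trans_le (hfg _)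

lemma const_mul {c : ℝ} (hc : 0 < c) (hf : Wins f ω) : Wins (fun x => c * f x) ω := fun C =>
  (hf (C / c)).imp fun _ hn => (div_lt_iff₀' hc).1 hn

end Wins

/-- **Combining countably many martingales.** If `(m i)` are martingales with
`m i [] ≤ 1` and `(α i)` are positive reals summing to `1`, then `x ↦ ∑' i, α i * m i x`
is a well-defined martingale winning against every sequence against which some `m i`
wins. -/
theorem combine_martingales (m : ℕ → List Bool → ℝ) (hm : ∀ i, IsMartingale (m i))
    (hm1 : ∀ i, m i [] ≤ 1) (α : ℕ → ℝ) (hα : ∀ i, 0 < α i) (hsum : HasSum α 1) :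
    (∀ x : List Bool, Summable fun i => α i * m i x) ∧
      IsMartingale (fun x => ∑' i, α i * m i x) ∧
      ∀ ω : ℕ → Bool, (∃ i, Wins (m i) ω) →
        Wins (fun x => ∑' i, α i * m i x) ω := by
  have hα0 : ∀ i, 0 ≤ α i := fun i => (hα i).le
  have hS := IsMartingale.summable_mul hm hm1 hα0 hsum.summable
  refine ⟨hS, IsMartingale.tsum_mul hm hα0 hS, ?_⟩
  rintro ω ⟨i, hi⟩
  exact (hi.const_mul (hα i)).mono fun x =>
    (hS x).le_tsum i fun j _ => mul_nonneg (hα0 j) ((hm j).1 x)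
end

section
/- Nonexistence of collectives with respect to all selection rules: for every sequence ω : ℕ → Bool that has limit frequency p with 0 < p < 1, there exists a selection rule s whose value depends only on the length of its argument such that the subsequence selected by s from ω is infinite and has limit frequency 1 (hence different from p). -/
open Filter MeasureTheory Set
open scoped ENNReal

/-! Select exactly the terms equal to `true`, with the rule `x ↦ ω x.length`. It depends only
on the length of its argument, and the selected subsequence is constantly `true`, hence has
limit frequency `1`. It is infinite because a sequence with finitely many `true`s has limit
frequency `0`. -/

theorem LimitFreq.eq_zero_of_finite {α : ℕ → Bool} {p : ℝ} (hα : LimitFreq α p)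
    (hfin : {i | α i = true}.Finite) : p = 0 := by
  have hsub : ∀ N, (Finset.range N).filter (fun i => α i = true) ⊆ hfin.toFinset := by
    intro N i hi
    simpa using (Finset.mem_filter.mp hi).2
  have hzero : LimitFreq α 0 :=
    squeeze_zero (fun N => by positivity) (fun N => by gcongr; exact hsub N)
      (tendsto_const_div_atTop_nhds_zero_nat (hfin.toFinset.card : ℝ))
  exact tendsto_nhds_unique hα hzero

theorem LimitFreq.infinite_setOf_true {α : ℕ → Bool} {p : ℝ} (hα : LimitFreq α p)
    (hp : p ≠ 0) : {i | α i = true}.Infinite :=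
  fun hfin => hp (hα.eq_zero_of_finite hfin)

theorem limitFreq_one_of_forall_true {α : ℕ → Bool} (hα : ∀ n, α n = true) :
    LimitFreq α 1 := by
  have hfreq : (fun N : ℕ => (((Finset.range N).filter fun i => α i = true).card : ℝ) / N)
      =ᶠ[atTop] fun _ => 1 := by
    filter_upwards [eventually_ne_atTop 0] with N hN
    rw [Finset.filter_true_of_mem (fun i _ => hα i), Finset.card_range, div_self]
    exact_mod_cast hN
  exact tendsto_const_nhds.congr' hfreq.symm

theorem selectedSeq_eq_true {s : List Bool → Bool} {ω : ℕ → Bool}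
    (hinf : (SelectedIndices s ω).Infinite) (hsel : ∀ i ∈ SelectedIndices s ω, ω i = true)
    (n : ℕ) : SelectedSeq s ω n = true :=
  hsel _ (Nat.nth_mem_of_infinite hinf n)

theorem selectedIndices_length_rule (ω : ℕ → Bool) :
    SelectedIndices (fun x => ω x.length) ω = {i | ω i = true} := by
  ext i
  simp [SelectedIndices, prefixFn]

theorem no_collective_for_all_rules_general (ω : ℕ → Bool) (p : ℝ) (hp0 : 0 < p)
    (hω : LimitFreq ω p) :
    ∃ s : List Bool → Bool,
      (∀ x y : List Bool, x.length = y.length → s x = s y) ∧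
      (SelectedIndices s ω).Infinite ∧ LimitFreq (SelectedSeq s ω) 1 := by
  have hinf : (SelectedIndices (fun x => ω x.length) ω).Infinite := by
    rw [selectedIndices_length_rule]
    exact hω.infinite_setOf_true hp0.ne'
  refine ⟨fun x => ω x.length, fun x y h => congrArg ω h, hinf, ?_⟩
  refine limitFreq_one_of_forall_true (selectedSeq_eq_true hinf fun i hi => ?_)
  rwa [selectedIndices_length_rule] at hi

/-- **Nonexistence of collectives w.r.t. all selection rules.** For every sequence with
limit frequency `p ∈ (0,1)` there is a selection rule, depending only on the length of
its argument, selecting an infinite subsequence with limit frequency `1`. -/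
theorem no_collective_for_all_rules (ω : ℕ → Bool) (p : ℝ) (hp0 : 0 < p) (hp1 : p < 1)
    (hω : LimitFreq ω p) :
    ∃ s : List Bool → Bool,
      (∀ x y : List Bool, x.length = y.length → s x = s y) ∧
      (SelectedIndices s ω).Infinite ∧ LimitFreq (SelectedSeq s ω) 1 :=
  no_collective_for_all_rules_general ω p hp0 hω
end

section
/- Strong law of large numbers for selected subsequences: for every selection rule s and every real p with 0 < p < 1, the set of sequences ω : ℕ → Bool for which the subsequence selected by s from ω is infinite but does not have limit frequency p is a null set for the Bernoulli(p) product measure on ℕ → Bool. -/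
open Filter MeasureTheory Set
open scoped ENNReal

/-- `μ` is the Bernoulli(`p`) product measure on Cantor space: the infinite product over
`ℕ` of the measure on `Bool` giving `true` probability `p` and `false` probability
`1 - p`; it is characterized by its values on cylinders. -/
def IsBernoulliMeasure (p : ℝ) (μ : Measure (ℕ → Bool)) : Prop :=
  ∀ w : List Bool,
    μ (cyl w) =
      (w.map fun b => if b = true then ENNReal.ofReal p else ENNReal.ofReal (1 - p)).prod

/-!
Fix `l` with `|l| ≤ 1` and let `C` be the number of positions selected so far and `T` the
number of `true`s among them. A selection rule only looks at the past, and a Bernoulli(`p`) bit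
`X` satisfies `E exp (l (X - p)) ≤ exp l²`; hence `exp (l (T - p C) - l² C)` is a nonnegative
supermartingale, and by Ville's maximal inequality it ever exceeds `exp a` with probability at
most `exp (-a)`. Taking `l = ± ε / 2`, the probability that at the moment of the `N`-th selection
the number of `true`s deviates from `p N` by at least `ε N` is at most `2 exp (-ε² N / 4)`. This
is summable in `N`, so by Borel–Cantelli almost surely only finitely many `N` are exceptional,
for every `ε = 1 / (m + 1)`.
-/

lemma Nat.card_filter_range_and_eq_card_filter_nth (P q : ℕ → Prop) [DecidablePred P]
    [DecidablePred q] (n : ℕ) :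
    ((Finset.range n).filter fun i => P i ∧ q i).card =
      ((Finset.range (Nat.count P n)).filter fun k => q (Nat.nth P k)).card := by
  induction n with
  | zero => simp
  | succ n ih =>
    rw [Finset.range_add_one, Finset.filter_insert, Nat.count_succ]
    by_cases hP : P n
    · rw [if_pos hP, Finset.range_add_one, Finset.filter_insert, Nat.nth_count hP]
      by_cases hq : q n
      · rw [if_pos ⟨hP, hq⟩, if_pos hq, Finset.card_insert_of_notMem (by simp),
          Finset.card_insert_of_notMem (by simp), ih]
      · rw [if_neg (fun h => hq h.2), if_neg hq, ih]
    · rw [if_neg (fun h => hP h.1), if_neg hP, add_zero, ih]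

namespace CantorSpace

variable {p : ℝ} {μ : Measure (ℕ → Bool)}

noncomputable def bitWeight (p : ℝ) (b : Bool) : ℝ≥0∞ :=
  if b = true then ENNReal.ofReal p else ENNReal.ofReal (1 - p)

noncomputable def wordWeight (p : ℝ) (w : List Bool) : ℝ≥0∞ := (w.map (bitWeight p)).prod

noncomputable def wordExpect (p : ℝ) (M : List Bool → ℝ≥0∞) (n : ℕ) : ℝ≥0∞ :=
  ∑ v : Fin n → Bool, wordWeight p (List.ofFn v) * M (List.ofFn v)

def IsBernoulliSupermartingale (p : ℝ) (M : List Bool → ℝ≥0∞) : Prop :=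
  ∀ w, ∑ b, bitWeight p b * M (w ++ [b]) ≤ M w

lemma sum_bitWeight (hp0 : 0 ≤ p) (hp1 : p ≤ 1) : ∑ b, bitWeight p b = 1 := by
  rw [Fintype.sum_bool, bitWeight, bitWeight, if_pos rfl, if_neg Bool.false_ne_true,
    ← ENNReal.ofReal_add hp0 (by linarith), add_sub_cancel, ENNReal.ofReal_one]

lemma wordExpect_zero (M : List Bool → ℝ≥0∞) : wordExpect p M 0 = M [] := by
  simp [wordExpect, wordWeight]

lemma wordExpect_succ (M : List Bool → ℝ≥0∞) (n : ℕ) :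
    wordExpect p M (n + 1) = wordExpect p (fun w => ∑ b, bitWeight p b * M (w ++ [b])) n := by
  rw [wordExpect, ← (Fin.snocEquiv fun _ => Bool).sum_comp, Fintype.sum_prod_type, Finset.sum_comm]
  refine Finset.sum_congr rfl fun v _ => ?_
  simp only [Fin.snocEquiv_apply, List.ofFn_succ_last, Fin.snoc_castSucc, Fin.snoc_last,
    wordWeight, List.map_append, List.prod_append, Finset.mul_sum]
  refine Finset.sum_congr rfl fun b _ => ?_
  simp only [List.map_cons, List.map_nil, List.prod_cons, List.prod_nil, mul_one]
  ring

lemma wordExpect_mono {M M' : List Bool → ℝ≥0∞} (h : ∀ w, M w ≤ M' w) (n : ℕ) :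
    wordExpect p M n ≤ wordExpect p M' n :=
  Finset.sum_le_sum fun _ _ => mul_le_mul_right (h _) _

lemma IsBernoulliSupermartingale.wordExpect_le {M : List Bool → ℝ≥0∞}
    (hM : IsBernoulliSupermartingale p M) (n : ℕ) : wordExpect p M n ≤ M [] := by
  induction n with
  | zero => rw [wordExpect_zero]
  | succ n ih => exact (wordExpect_succ M n).trans_le ((wordExpect_mono hM n).trans ih)

lemma mem_cyl_prefixFn (ω : ℕ → Bool) (n : ℕ) : ω ∈ cyl (prefixFn ω n) := by
  simp [cyl, prefixFn]

lemma length_prefixFn (ω : ℕ → Bool) (n : ℕ) : (prefixFn ω n).length = n :=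
  List.length_ofFn

lemma prefixFn_take (ω : ℕ → Bool) {k n : ℕ} (h : k ≤ n) :
    (prefixFn ω n).take k = prefixFn ω k := by
  apply List.ext_getElem <;> simp [prefixFn, h]

/-- Markov's inequality. -/
lemma mul_measure_le_wordExpect (hμ : IsBernoulliMeasure p μ)
    (M : List Bool → ℝ≥0∞) (c : ℝ≥0∞) (n : ℕ) :
    c * μ {ω | c ≤ M (prefixFn ω n)} ≤ wordExpect p M n := by
  classical
  set A := Finset.univ.filter fun v : Fin n → Bool => c ≤ M (List.ofFn v)
  have hcover : {ω | c ≤ M (prefixFn ω n)} ⊆ ⋃ v ∈ A, cyl (List.ofFn v) := fun ω hω =>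
    mem_biUnion (Finset.mem_filter.2 ⟨Finset.mem_univ _, hω⟩) (mem_cyl_prefixFn ω n)
  calc c * μ {ω | c ≤ M (prefixFn ω n)}
      ≤ c * ∑ v ∈ A, wordWeight p (List.ofFn v) := by
        gcongr
        exact (measure_mono hcover).trans ((measure_biUnion_finset_le A _).trans_eq
          (Finset.sum_congr rfl fun v _ => hμ _))
    _ ≤ ∑ v ∈ A, wordWeight p (List.ofFn v) * M (List.ofFn v) := by
        rw [Finset.mul_sum]
        exact Finset.sum_le_sum fun v hv => by
          rw [mul_comm]; exact mul_le_mul_right (Finset.mem_filter.1 hv).2 _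
    _ ≤ wordExpect p M n := Finset.sum_le_sum_of_subset (Finset.filter_subset _ _)

noncomputable def stopAbove (c : ℝ≥0∞) (M : List Bool → ℝ≥0∞) (w : List Bool) : ℝ≥0∞ :=
  open Classical in
  if h : ∃ k ≤ w.length, c ≤ M (w.take k) then M (w.take (Nat.find h)) else M w

lemma le_stopAbove_iff {c : ℝ≥0∞} {M : List Bool → ℝ≥0∞} {w : List Bool} :
    c ≤ stopAbove c M w ↔ ∃ k ≤ w.length, c ≤ M (w.take k) := by
  classical
  unfold stopAbove
  split_ifs with h
  · exact iff_of_true (Nat.find_spec h).2 h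
  · exact iff_of_false (fun hc => h ⟨w.length, le_rfl, by rwa [List.take_length]⟩) h

lemma stopAbove_nil (c : ℝ≥0∞) (M : List Bool → ℝ≥0∞) : stopAbove c M [] = M [] := by
  unfold stopAbove
  split_ifs <;> simp

lemma stopAbove_append (c : ℝ≥0∞) (M : List Bool → ℝ≥0∞) (w : List Bool) (b : Bool) :
    stopAbove c M (w ++ [b]) =
      if ∃ k ≤ w.length, c ≤ M (w.take k) then stopAbove c M w else M (w ++ [b]) := by
  classical
  have htake : ∀ k ≤ w.length, (w ++ [b]).take k = w.take k := fun k hk =>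
    List.take_append_of_le_length hk
  have hlen : (w ++ [b]).length = w.length + 1 := by simp
  by_cases hw : ∃ k ≤ w.length, c ≤ M (w.take k)
  · obtain ⟨hle, hc⟩ := Nat.find_spec hw
    have hx : Nat.find hw ≤ (w ++ [b]).length ∧ c ≤ M ((w ++ [b]).take (Nat.find hw)) :=
      ⟨hlen ▸ hle.trans (Nat.le_succ _), (htake _ hle).symm ▸ hc⟩
    rw [if_pos hw, stopAbove, stopAbove, dif_pos hw, dif_pos ⟨_, hx⟩]
    rw [Nat.find_congr (q := fun k => k ≤ w.length ∧ c ≤ M (w.take k)) hx fun k hk => ?_,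
      htake _ hle]
    have hkw := hk.trans hle
    simp only [hlen, htake k hkw, hkw, hkw.trans (Nat.le_succ _), true_and]
  · rw [if_neg hw, stopAbove]
    split_ifs with hwb
    · obtain ⟨hle, hc⟩ := Nat.find_spec hwb
      rcases (hle.trans_eq hlen).lt_or_eq with hlt | heq
      · exact absurd ⟨_, Nat.lt_succ_iff.1 hlt, htake _ (Nat.lt_succ_iff.1 hlt) ▸ hc⟩ hw
      · rw [heq, ← hlen, List.take_length]
    · rfl

lemma isBernoulliSupermartingale_stopAbove (hp0 : 0 ≤ p) (hp1 : p ≤ 1)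
    {M : List Bool → ℝ≥0∞} (hM : IsBernoulliSupermartingale p M) (c : ℝ≥0∞) :
    IsBernoulliSupermartingale p (stopAbove c M) := by
  intro w
  simp only [stopAbove_append]
  split_ifs with h
  · rw [← Finset.sum_mul, sum_bitWeight hp0 hp1, one_mul]
  · rw [stopAbove, dif_neg h]
    exact hM w

/-- Ville's maximal inequality. -/
theorem IsBernoulliSupermartingale.mul_measure_exists_le {M : List Bool → ℝ≥0∞}
    (hM : IsBernoulliSupermartingale p M) (hμ : IsBernoulliMeasure p μ) (hp0 : 0 ≤ p) (hp1 : p ≤ 1)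
    (c : ℝ≥0∞) : c * μ {ω | ∃ n, c ≤ M (prefixFn ω n)} ≤ M [] := by
  have hstop : ∀ ω n, c ≤ stopAbove c M (prefixFn ω n) ↔ ∃ k ≤ n, c ≤ M (prefixFn ω k) := by
    intro ω n
    rw [le_stopAbove_iff, length_prefixFn]
    exact exists_congr fun k => and_congr_right fun hk => by rw [prefixFn_take ω hk]
  have hunion : {ω | ∃ n, c ≤ M (prefixFn ω n)} = ⋃ n, {ω | c ≤ stopAbove c M (prefixFn ω n)} := by
    ext ω
    simp only [mem_ofPred_eq, mem_iUnion, hstop]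
    exact ⟨fun ⟨n, hn⟩ => ⟨n, n, le_rfl, hn⟩, fun ⟨_, k, _, hk⟩ => ⟨k, hk⟩⟩
  have hmono : Monotone fun n => {ω | c ≤ stopAbove c M (prefixFn ω n)} := by
    intro m n hmn ω
    simp only [mem_ofPred_eq, hstop]
    exact fun ⟨k, hk, hc⟩ => ⟨k, hk.trans hmn, hc⟩
  rw [hunion, hmono.measure_iUnion, ENNReal.mul_iSup]
  refine iSup_le fun n => (mul_measure_le_wordExpect hμ _ c n).trans ?_
  exact ((isBernoulliSupermartingale_stopAbove hp0 hp1 hM c).wordExpect_le n).trans_eq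
    (stopAbove_nil c M)

def posCount (Q : List Bool → Bool → Bool) (w : List Bool) : ℕ :=
  ((Finset.range w.length).filter fun i => Q (w.take i) (w.getD i false) = true).card

lemma posCount_nil (Q : List Bool → Bool → Bool) : posCount Q [] = 0 := rfl

lemma posCount_append (Q : List Bool → Bool → Bool) (w : List Bool) (b : Bool) :
    posCount Q (w ++ [b]) = posCount Q w + (Q w b).toNat := by
  simp only [posCount, Finset.card_filter, List.length_append, List.length_singleton,
    Finset.sum_range_succ, List.take_left, List.getD_append_right _ _ _ _ le_rfl, Nat.sub_self,
    List.getD_cons_zero]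
  congr 1
  · refine Finset.sum_congr rfl fun i hi => ?_
    have hi := Finset.mem_range.1 hi
    rw [List.take_append_of_le_length hi.le, List.getD_append _ _ _ _ hi]
  · cases Q w b <;> rfl

lemma posCount_prefixFn (Q : List Bool → Bool → Bool) (ω : ℕ → Bool) (n : ℕ) :
    posCount Q (prefixFn ω n) =
      ((Finset.range n).filter fun i => Q (prefixFn ω i) (ω i) = true).card := by
  rw [posCount, length_prefixFn]
  refine congrArg _ (Finset.filter_congr fun i hi => ?_)
  have hi := Finset.mem_range.1 hi
  rw [prefixFn_take ω hi.le]
  simp [prefixFn, hi]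

variable (s : List Bool → Bool)

def selCount : List Bool → ℕ := posCount fun u _ => s u

def selTrueCount : List Bool → ℕ := posCount fun u b => s u && b

lemma exp_le_one_add_add_sq {x : ℝ} (hx : |x| ≤ 1) : Real.exp x ≤ 1 + x + x ^ 2 := by
  linarith [(abs_le.1 (Real.abs_exp_sub_one_sub_id_le hx)).2]

lemma bernoulli_mgf_le {l : ℝ} (hp0 : 0 ≤ p) (hp1 : p ≤ 1) (hl : |l| ≤ 1) :
    (1 - p) * Real.exp (l * (0 - p)) + p * Real.exp (l * (1 - p)) ≤ Real.exp (l ^ 2) := by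
  have hbit : ∀ x : ℝ, |x| ≤ 1 → Real.exp (l * x) ≤ 1 + l * x + l ^ 2 := fun x hx => by
    have hlx : |l * x| ≤ 1 := by
      rw [abs_mul]; exact mul_le_one₀ hl (abs_nonneg _) hx
    have hx2 : x ^ 2 ≤ 1 := by
      rw [← sq_abs]; exact pow_le_one₀ (abs_nonneg _) hx
    have hsq : (l * x) ^ 2 ≤ l ^ 2 := by
      rw [mul_pow]; exact mul_le_of_le_one_right (sq_nonneg _) hx2
    linarith [exp_le_one_add_add_sq hlx]
  have h0 := hbit (0 - p) (by rw [abs_le]; constructor <;> linarith)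
  have h1 := hbit (1 - p) (by rw [abs_le]; constructor <;> linarith)
  calc (1 - p) * Real.exp (l * (0 - p)) + p * Real.exp (l * (1 - p))
      ≤ (1 - p) * (1 + l * (0 - p) + l ^ 2) + p * (1 + l * (1 - p) + l ^ 2) := by
        gcongr
    _ = l ^ 2 + 1 := by ring
    _ ≤ Real.exp (l ^ 2) := Real.add_one_le_exp _

lemma sum_bitWeight_mul_exp_le_one {l : ℝ} (hp0 : 0 ≤ p) (hp1 : p ≤ 1) (hl : |l| ≤ 1) :
    ∑ b, bitWeight p b * ENNReal.ofReal (Real.exp (l * ((b.toNat : ℝ) - p) - l ^ 2)) ≤ 1 := by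
  have hmgf := bernoulli_mgf_le hp0 hp1 hl
  rw [Fintype.sum_bool, bitWeight, bitWeight, if_pos rfl, if_neg Bool.false_ne_true,
    ← ENNReal.ofReal_mul hp0, ← ENNReal.ofReal_mul (by linarith),
    ← ENNReal.ofReal_add (by positivity) (mul_nonneg (by linarith) (Real.exp_nonneg _)),
    ENNReal.ofReal_le_one]
  simp only [Real.exp_sub, Bool.toNat_true, Bool.toNat_false, Nat.cast_one, Nat.cast_zero]
  rw [mul_div_assoc', mul_div_assoc', ← add_div, div_le_one (Real.exp_pos _)]
  linarith

noncomputable def expMart (p l : ℝ) (w : List Bool) : ℝ≥0∞ :=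
  ENNReal.ofReal (Real.exp
    (l * ((selTrueCount s w : ℝ) - p * selCount s w) - l ^ 2 * selCount s w))

lemma expMart_nil (p l : ℝ) : expMart s p l [] = 1 := by
  simp [expMart, selCount, selTrueCount, posCount_nil]

lemma expMart_append (l : ℝ) (w : List Bool) (b : Bool) :
    expMart s p l (w ++ [b]) = expMart s p l w *
      if s w = true then ENNReal.ofReal (Real.exp (l * ((b.toNat : ℝ) - p) - l ^ 2)) else 1 := by
  simp only [expMart, selCount, selTrueCount, posCount_append]
  split_ifs with hs
  · rw [← ENNReal.ofReal_mul (Real.exp_nonneg _), ← Real.exp_add, hs]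
    congr 2
    cases b <;> simp <;> ring
  · simp [Bool.eq_false_iff.2 hs]

lemma isBernoulliSupermartingale_expMart (hp0 : 0 ≤ p) (hp1 : p ≤ 1) {l : ℝ} (hl : |l| ≤ 1) :
    IsBernoulliSupermartingale p (expMart s p l) := by
  intro w
  simp only [expMart_append, mul_left_comm (bitWeight p _), ← Finset.mul_sum]
  split_ifs
  · exact mul_le_of_le_one_right' (sum_bitWeight_mul_exp_le_one hp0 hp1 hl)
  · rw [← Finset.sum_mul, sum_bitWeight hp0 hp1, one_mul, mul_one]

lemma measure_exists_expMart_ge (hμ : IsBernoulliMeasure p μ)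
    (hp0 : 0 ≤ p) (hp1 : p ≤ 1) {l : ℝ} (hl : |l| ≤ 1) (a : ℝ) :
    μ {ω | ∃ n, ENNReal.ofReal (Real.exp a) ≤ expMart s p l (prefixFn ω n)}
      ≤ ENNReal.ofReal (Real.exp (-a)) := by
  have hville := (isBernoulliSupermartingale_expMart s hp0 hp1 hl).mul_measure_exists_le
    hμ hp0 hp1 (ENNReal.ofReal (Real.exp a))
  rw [expMart_nil, mul_comm, ← ENNReal.le_inv_iff_mul_le] at hville
  rwa [Real.exp_neg, ENNReal.ofReal_inv_of_pos (Real.exp_pos a)]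

def deviationSet (p ε : ℝ) (N : ℕ) : Set (ℕ → Bool) :=
  {ω | ∃ n, selCount s (prefixFn ω n) = N ∧
    ε * N ≤ |(selTrueCount s (prefixFn ω n) : ℝ) - p * N|}

lemma measure_deviationSet_le (hμ : IsBernoulliMeasure p μ)
    (hp0 : 0 ≤ p) (hp1 : p ≤ 1) {ε : ℝ} (hε0 : 0 ≤ ε) (hε1 : ε ≤ 1) (N : ℕ) :
    μ (deviationSet s p ε N) ≤ 2 * ENNReal.ofReal (Real.exp (-(ε ^ 2 * N / 4))) := by
  set a := ε ^ 2 * N / 4 with ha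
  set A : ℝ → Set (ℕ → Bool) := fun l =>
    {ω | ∃ n, ENNReal.ofReal (Real.exp a) ≤ expMart s p l (prefixFn ω n)}
  have hA : ∀ l, |l| ≤ 1 → μ (A l) ≤ ENNReal.ofReal (Real.exp (-a)) := fun l hl =>
    measure_exists_expMart_ge s hμ hp0 hp1 hl a
  have hl : |ε / 2| ≤ 1 := abs_le.2 ⟨by linarith, by linarith⟩
  -- Chernoff: with `l = ± ε / 2`, a deviation of `ε N` makes the exponent at least `ε² N / 4`.
  have hsub : deviationSet s p ε N ⊆ A (ε / 2) ∪ A (-(ε / 2)) := by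
    rintro ω ⟨n, hC, hdev⟩
    have hmem : ∀ l, a ≤ l * ((selTrueCount s (prefixFn ω n) : ℝ) - p * N) - l ^ 2 * N →
        ω ∈ A l := fun l hl =>
      ⟨n, by rw [expMart, hC]; exact ENNReal.ofReal_le_ofReal (Real.exp_le_exp.2 hl)⟩
    rcases le_abs'.1 hdev with h | h
    · refine Or.inr (hmem _ ?_)
      linarith [mul_le_mul_of_nonneg_left h (by positivity : (0 : ℝ) ≤ ε / 2), ha]
    · refine Or.inl (hmem _ ?_)
      linarith [mul_le_mul_of_nonneg_left h (by positivity : (0 : ℝ) ≤ ε / 2), ha]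
  calc μ (deviationSet s p ε N) ≤ μ (A (ε / 2)) + μ (A (-(ε / 2))) :=
        (measure_mono hsub).trans (measure_union_le _ _)
    _ ≤ ENNReal.ofReal (Real.exp (-a)) + ENNReal.ofReal (Real.exp (-a)) :=
        add_le_add (hA _ hl) (hA _ (by rwa [abs_neg]))
    _ = 2 * ENNReal.ofReal (Real.exp (-a)) := (two_mul _).symm

lemma measure_limsup_deviationSet (hμ : IsBernoulliMeasure p μ)
    (hp0 : 0 ≤ p) (hp1 : p ≤ 1) {ε : ℝ} (hε0 : 0 < ε) (hε1 : ε ≤ 1) :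
    μ (limsup (deviationSet s p ε) atTop) = 0 := by
  refine measure_limsup_atTop_eq_zero (ne_top_of_le_ne_top ?_
    (ENNReal.tsum_le_tsum fun N => measure_deviationSet_le s hμ hp0 hp1 hε0.le hε1 N))
  set r := ENNReal.ofReal (Real.exp (-(ε ^ 2 / 4)))
  have hr : r < 1 := ENNReal.ofReal_lt_one.2 (Real.exp_lt_one_iff.2 (by nlinarith))
  have hpow : ∀ N : ℕ, ENNReal.ofReal (Real.exp (-(ε ^ 2 * N / 4))) = r ^ N := fun N => by
    rw [← ENNReal.ofReal_pow (Real.exp_nonneg _), ← Real.exp_nat_mul]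
    ring_nf
  simp only [hpow, ENNReal.tsum_mul_left, ENNReal.tsum_geometric]
  exact ENNReal.mul_ne_top ENNReal.ofNat_ne_top (ENNReal.inv_ne_top.2 (tsub_pos_of_lt hr).ne')

lemma selCount_prefixFn (ω : ℕ → Bool) (n : ℕ) :
    selCount s (prefixFn ω n) = Nat.count (fun i => s (prefixFn ω i) = true) n := by
  rw [selCount, posCount_prefixFn, Nat.count_eq_card_filter_range]

lemma selTrueCount_prefixFn (ω : ℕ → Bool) (n : ℕ) :
    selTrueCount s (prefixFn ω n) =
      ((Finset.range (selCount s (prefixFn ω n))).filter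
        fun k => SelectedSeq s ω k = true).card := by
  rw [selTrueCount, posCount_prefixFn, selCount_prefixFn]
  simp only [Bool.and_eq_true]
  exact Nat.card_filter_range_and_eq_card_filter_nth _ (fun i => ω i = true) n

lemma mem_deviationSet_of_le_dist {ε : ℝ} {ω : ℕ → Bool}
    (hinf : (SelectedIndices s ω).Infinite) {N : ℕ} (hN : 0 < N)
    (hdist : ε ≤
      dist ((((Finset.range N).filter fun k => SelectedSeq s ω k = true).card : ℝ) / N) p) :
    ω ∈ deviationSet s p ε N := by
  have hcount : selCount s (prefixFn ω (Nat.nth (· ∈ SelectedIndices s ω) N)) = N := by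
    rw [selCount_prefixFn]
    exact Nat.count_nth_of_infinite hinf N
  refine ⟨_, hcount, ?_⟩
  rw [selTrueCount_prefixFn, hcount]
  have hNpos : (0 : ℝ) < N := Nat.cast_pos.2 hN
  set T := (((Finset.range N).filter fun k => SelectedSeq s ω k = true).card : ℝ)
  calc ε * N ≤ |T / N - p| * N := by rw [← Real.dist_eq]; gcongr
    _ = |(T / N - p) * N| := by rw [abs_mul, abs_of_pos hNpos]
    _ = |T - p * N| := by rw [sub_mul, div_mul_cancel₀ _ hNpos.ne']

end CantorSpace

open CantorSpace

/-- **Strong law of large numbers for selected subsequences.** For every selection rule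
`s` and `p ∈ (0,1)`, the sequences whose `s`-selected subsequence is infinite but does
not have limit frequency `p` form a Bernoulli(`p`)-null set. -/
theorem slln_selected_subsequence (s : List Bool → Bool) (p : ℝ)
    (hp0 : 0 < p) (hp1 : p < 1)
    (μ : Measure (ℕ → Bool)) (hμ : IsBernoulliMeasure p μ) :
    μ {ω : ℕ → Bool | (SelectedIndices s ω).Infinite ∧
      ¬ LimitFreq (SelectedSeq s ω) p} = 0 := by
  have hnull : ∀ m : ℕ, μ (limsup (deviationSet s p (1 / (m + 1))) atTop) = 0 := fun m =>
    measure_limsup_deviationSet s hμ hp0.le hp1.le (by positivity)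
      (div_le_one_of_le₀ (by linarith [m.cast_nonneg (α := ℝ)]) (by positivity))
  refine measure_mono_null (fun ω hω => ?_) (measure_iUnion_null hnull)
  obtain ⟨hinf, hfreq⟩ := hω
  rw [LimitFreq, Metric.tendsto_atTop] at hfreq
  push Not at hfreq
  obtain ⟨ε, hε, hbad⟩ := hfreq
  obtain ⟨m, hm⟩ := exists_nat_one_div_lt hε
  refine mem_iUnion.2 ⟨m, mem_limsup_iff_frequently_mem.2 (frequently_atTop.2 fun N₀ => ?_)⟩
  obtain ⟨N, hN, hdist⟩ := hbad (max N₀ 1)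
  exact ⟨N, le_of_max_le_left hN,
    mem_deviationSet_of_le_dist s hinf (by omega) (hm.le.trans hdist)⟩
end
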